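/- arXiv:2003.04834 — 9 statements merged into one kernel-verified Lean document; each statement's English description precedes it below -/
import Mathlib

section
/- For all d, n, k, the set of tensors f : (Fin d → Fin n) → ℂ that are computed by some single-(source,sink) ABP of some format (w_0, …, w_d) with w_0 = w_d = 1 and w_i ≤ k for all 0 ≤ i ≤ d, is a closed subset of the finite-dimensional complex vector space (Fin d → Fin n) → ℂ with its standard topology. In particular, border single-(source,sink) ABP width complexity equals single-(source,sink) ABP width complexity for every homogeneous noncommutative polynomial. -/
open scoped BigOperators

namespace Nisan

/-- A single-(source,sink) ABP of format `w` (with `w 0 = 1` and `w d = 1`) computes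
the coefficient tensor `f` of a homogeneous degree-`d` noncommutative polynomial in
`n` variables if for every monomial `j : Fin d → Fin n` the value `f j` equals the
unique entry of the matrix product `T 0 (j 0) * ⋯ * T (d-1) (j (d-1))`, written here
as the sum over all source-to-sink paths of the products of the corresponding
matrix entries. -/
def Computes (d n : ℕ) (w : Fin (d + 1) → ℕ)
    (T : ∀ k : Fin d, Fin n → Matrix (Fin (w k.castSucc)) (Fin (w k.succ)) ℂ)
    (f : (Fin d → Fin n) → ℂ) : Prop :=
  ∀ j : Fin d → Fin n,
    f j = ∑ v : ∀ k : Fin (d + 1), Fin (w k),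
      ∏ k : Fin d, T k (j k) (v k.castSucc) (v k.succ)

/-- The `i`-th flattening `M_i(f)` of the coefficient tensor `f`: rows indexed by
tuples in `Fin i → Fin n`, columns by tuples in `Fin (d - i) → Fin n`, with entry
`f` evaluated at the concatenation. -/
def flatten (d n : ℕ) (f : (Fin d → Fin n) → ℂ) (i : ℕ) (hi : i ≤ d) :
    Matrix (Fin i → Fin n) (Fin (d - i) → Fin n) ℂ :=
  Matrix.of fun r c => f fun j => Fin.append r c (Fin.cast (by omega) j)

end Nisan

namespace Nisan

/-- `f` is computable by a single-(source,sink) ABP all of whose layers have at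
most `k` vertices. -/
def WidthLe (d n k : ℕ) (f : (Fin d → Fin n) → ℂ) : Prop :=
  ∃ w : Fin (d + 1) → ℕ, w 0 = 1 ∧ w (Fin.last d) = 1 ∧ (∀ i, w i ≤ k) ∧
    ∃ T : ∀ j : Fin d, Fin n → Matrix (Fin (w j.castSucc)) (Fin (w j.succ)) ℂ,
      Computes d n w T f

end Nisan

/-!
A single-(source,sink) ABP of width at most `k ≥ 1` amounts to writing `f j` as the `(0, 0)` entry
of a product of `k × k` matrices, one for each letter of `j` (pad the layers with zeros). For
`d ≥ 1`, Nisan's characterization says that such matrices exist iff every flattening `M_i(f)` has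
rank at most `k`. Splitting the product after the `i`-th factor factors `M_i(f)` through `ℂ^k`.
Conversely, choose `k` vectors `B_i` spanning the row space of each `M_i(f)`. The row of
`M_{i+1}(f)` at `r x` is the residual by `x` of the row of `M_i(f)` at `r`, so the residuals of the
`B_i` lie in the span of `B_{i+1}`, and their coefficients form the matrices of the layers.
As `{A | rank A ≤ k}` is closed, the set is an intersection of closed sets; for `k = 0` it is empty
and for `d = 0` it is `{1}`.
-/

theorem List.ofFn_comp_cast {α : Type*} {m m' : ℕ} (h : m = m') (g : Fin m' → α) :
    List.ofFn (fun j => g (Fin.cast h j)) = List.ofFn g := by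
  subst h
  rfl

theorem List.ofFn_fin_snoc {α : Type*} {m : ℕ} (g : Fin m → α) (x : α) :
    List.ofFn (Fin.snoc g x : Fin (m + 1) → α) = List.ofFn g ++ [x] := by
  rw [List.ofFn_succ_last]
  simp

theorem Fintype.sum_pi_fin_castLE {R α : Type*} [AddCommMonoid R] [Fintype α] [DecidableEq α]
    {K : ℕ} {w : α → ℕ} (hw : ∀ a, w a ≤ K) (g : (α → Fin K) → R) :
    ∑ v : (∀ a, Fin (w a)), g (fun a => (v a).castLE (hw a)) =
      ∑ u : α → Fin K, if ∀ a, (u a : ℕ) < w a then g u else 0 := by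
  rw [← Finset.sum_filter]
  refine Finset.sum_bij (fun v _ a => (v a).castLE (hw a)) (fun v _ => ?_) (fun v _ v' _ h => ?_)
    (fun u hu => ?_) (fun _ _ => rfl)
  · simp
  · funext a
    simpa [Fin.ext_iff] using congrFun h a
  · simp only [Finset.mem_filter, Finset.mem_univ, true_and] at hu
    exact ⟨fun a => ⟨u a, hu a⟩, Finset.mem_univ _, rfl⟩

section PathSum

open Matrix

variable {R ι : Type*} [CommSemiring R] [Fintype ι] [DecidableEq ι]

theorem Matrix.vecMul_list_prod_ofFn_dotProduct {d : ℕ} (M : Fin d → Matrix ι ι R) (x y : ι → R) :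
    x ᵥ* (List.ofFn M).prod ⬝ᵥ y =
      ∑ u : Fin (d + 1) → ι,
        x (u 0) * (∏ t, M t (u t.castSucc) (u t.succ)) * y (u (Fin.last d)) := by
  induction d generalizing x with
  | zero =>
    simp only [dotProduct, List.ofFn_zero, List.prod_nil, vecMul_one, Finset.univ_eq_empty,
      Finset.prod_empty, mul_one, Fin.last_zero]
    exact ((Equiv.funUnique (Fin 1) ι).sum_comp fun i => x i * y i).symm
  | succ d ih =>
    rw [List.ofFn_succ, List.prod_cons, ← vecMul_vecMul, ih]
    conv_rhs => rw [← (Fin.consEquiv fun _ => ι).sum_comp, Fintype.sum_prod_type]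
    rw [Finset.sum_comm]
    refine Finset.sum_congr rfl fun u _ => ?_
    simp [Fin.consEquiv, Fin.prod_univ_succ, vecMul, dotProduct, Finset.sum_mul, mul_assoc,
      Fin.cons_succ]

theorem Matrix.list_prod_ofFn_apply {d : ℕ} (M : Fin d → Matrix ι ι R) (a b : ι) :
    (List.ofFn M).prod a b =
      ∑ u : Fin (d + 1) → ι,
        if u 0 = a ∧ u (Fin.last d) = b then ∏ t, M t (u t.castSucc) (u t.succ) else 0 := by
  have hentry : (List.ofFn M).prod a b = Pi.single a 1 ᵥ* (List.ofFn M).prod ⬝ᵥ Pi.single b 1 := by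
    rw [single_one_vecMul, dotProduct_single_one, row_apply]
  rw [hentry, vecMul_list_prod_ofFn_dotProduct]
  refine Finset.sum_congr rfl fun u _ => ?_
  by_cases ha : u 0 = a <;> by_cases hb : u (Fin.last d) = b <;> simp [ha, hb]

end PathSum

theorem Submodule.exists_fin_span_range_eq_of_finrank_le {K E : Type*} [DivisionRing K]
    [AddCommGroup E] [Module K E] (V : Submodule K E) [Module.Finite K V] {k : ℕ}
    (hV : Module.finrank K V ≤ k) : ∃ B : Fin k → E, span K (Set.range B) = V := by
  obtain ⟨m, g, hg, hmk⟩ : ∃ m, ∃ g : Fin m → E, span K (Set.range g) = V ∧ m ≤ k := by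
    have : Module.Finite K (span K (V : Set E)) := by rwa [span_eq]
    obtain ⟨g, -, hg, -⟩ := exists_fun_fin_finrank_span_eq K (V : Set E)
    exact ⟨_, g, hg.trans (span_eq V), by rwa [span_eq]⟩
  refine ⟨fun a => if h : (a : ℕ) < m then g ⟨a, h⟩ else 0, hg ▸ le_antisymm ?_ ?_⟩
  · rw [span_le]
    rintro _ ⟨a, rfl⟩
    dsimp only
    split_ifs
    · exact subset_span ⟨_, rfl⟩
    · exact zero_mem _
  · refine span_mono ?_
    rintro _ ⟨a, rfl⟩
    exact ⟨Fin.castLE hmk a, by simp⟩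

theorem Matrix.isClosed_setOfPred_rank_le {𝕜 : Type*} [NontriviallyNormedField 𝕜] [CompleteSpace 𝕜]
    {m n : Type*} [Fintype m] [Fintype n] (k : ℕ) :
    IsClosed {A : Matrix m n 𝕜 | A.rank ≤ k} := by
  classical
  let toCLM : Matrix m n 𝕜 →ₗ[𝕜] (n → 𝕜) →L[𝕜] (m → 𝕜) :=
    LinearMap.toContinuousLinearMap.toLinearMap ∘ₗ Matrix.toLin'.toLinearMap
  have hrank (A : Matrix m n 𝕜) :
      (toCLM A : (n → 𝕜) →ₗ[𝕜] (m → 𝕜)).rank = A.rank := by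
    rw [Matrix.rank, Module.finrank_eq_rank]
    rfl
  have hopen := (isOpen_setOfPred_nat_le_rank (𝕜 := 𝕜) (E := n → 𝕜) (F := m → 𝕜) (k + 1)).preimage
    toCLM.continuous_of_finiteDimensional
  convert hopen.isClosed_compl using 1
  ext A
  simp [hrank]

namespace Nisan

variable {d n : ℕ}

section WordProd

variable {R ι : Type*} [Semiring R] [Fintype ι] [DecidableEq ι]

def wordProd (M : Fin d → Fin n → Matrix ι ι R) (j : Fin d → Fin n) : Matrix ι ι R :=
  (List.ofFn fun t => M t (j t)).prod

theorem wordProd_snoc (M : Fin (d + 1) → Fin n → Matrix ι ι R) (j : Fin d → Fin n) (x : Fin n) :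
    wordProd M (Fin.snoc j x) = wordProd (fun t => M t.castSucc) j * M (Fin.last d) x := by
  rw [wordProd, List.ofFn_succ_last]
  simp [wordProd]

theorem wordProd_append {i m : ℕ} (h : i + m = d) (M : Fin d → Fin n → Matrix ι ι R)
    (r : Fin i → Fin n) (c : Fin m → Fin n) :
    wordProd M (fun t => Fin.append r c (Fin.cast h.symm t)) =
      wordProd (fun t => M (Fin.cast h (Fin.castAdd m t))) r *
        wordProd (fun t => M (Fin.cast h (Fin.natAdd i t))) c := by
  subst h
  simp only [wordProd, Fin.cast_eq_self, List.ofFn_add, Fin.append_left', Fin.append_right,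
    List.prod_append]
  rfl

end WordProd

theorem computes_iff_of_eq_submatrix {k : ℕ} {w : Fin (d + 1) → ℕ} (hw : ∀ ℓ, w ℓ ≤ k)
    (M : Fin d → Fin n → Matrix (Fin k) (Fin k) ℂ)
    (T : ∀ t : Fin d, Fin n → Matrix (Fin (w t.castSucc)) (Fin (w t.succ)) ℂ)
    (hT : ∀ t x, T t x = (M t x).submatrix (Fin.castLE (hw _)) (Fin.castLE (hw _)))
    (f : (Fin d → Fin n) → ℂ) :
    Computes d n w T f ↔ ∀ j, f j = ∑ u : Fin (d + 1) → Fin k,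
      if ∀ ℓ, (u ℓ : ℕ) < w ℓ then ∏ t, M t (j t) (u t.castSucc) (u t.succ) else 0 := by
  simp only [Computes, hT, Matrix.submatrix_apply]
  exact forall_congr' fun j => by
    rw [Fintype.sum_pi_fin_castLE hw fun u => ∏ t, M t (j t) (u t.castSucc) (u t.succ)]
    congr!

theorem exists_forall_eq_wordProd_of_widthLe {k : ℕ} [NeZero k] {f : (Fin d → Fin n) → ℂ}
    (hf : WidthLe d n k f) :
    ∃ M : Fin d → Fin n → Matrix (Fin k) (Fin k) ℂ, ∀ j, f j = wordProd M j 0 0 := by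
  obtain ⟨w, hw0, hwd, hwk, T, hT⟩ := hf
  let M : Fin d → Fin n → Matrix (Fin k) (Fin k) ℂ := fun t x => Matrix.of fun a b =>
    if h : (a : ℕ) < w t.castSucc ∧ (b : ℕ) < w t.succ then T t x ⟨a, h.1⟩ ⟨b, h.2⟩ else 0
  rw [computes_iff_of_eq_submatrix hwk M T (fun t x => by ext a b; simp [M])] at hT
  refine ⟨M, fun j => (hT j).trans ?_⟩
  rw [wordProd, Matrix.list_prod_ofFn_apply]
  refine Finset.sum_congr rfl fun u _ => ?_
  by_cases hu : ∀ ℓ, (u ℓ : ℕ) < w ℓ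
  · have h0 : u 0 = 0 := Fin.ext (by rw [Fin.val_zero]; have := hu 0; omega)
    have hd : u (Fin.last d) = 0 := Fin.ext (by rw [Fin.val_zero]; have := hu (Fin.last d); omega)
    rw [if_pos hu, if_pos ⟨h0, hd⟩]
  · rw [if_neg hu, eq_comm, ite_eq_right_iff]
    rintro ⟨h0, -⟩
    obtain ⟨ℓ, hℓ⟩ := not_forall.mp hu
    -- `ℓ ≠ 0` as `u 0 = 0 < w 0`, so the edge entering layer `ℓ` lies in the zero padding
    obtain ⟨t, rfl⟩ := Fin.exists_succ_eq_of_ne_zero (x := ℓ) (by rintro rfl; simp_all)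
    exact Finset.prod_eq_zero (Finset.mem_univ t) (by simp [M, hℓ])

theorem widthLe_of_forall_eq_wordProd {k : ℕ} [NeZero k] {f : (Fin d → Fin n) → ℂ}
    (M : Fin d → Fin n → Matrix (Fin k) (Fin k) ℂ) (hM : ∀ j, f j = wordProd M j 0 0) :
    WidthLe d n k f := by
  let w : Fin (d + 1) → ℕ := fun ℓ => if ℓ = 0 ∨ ℓ = Fin.last d then 1 else k
  have hwk (ℓ : Fin (d + 1)) : w ℓ ≤ k := by
    have := NeZero.one_le (n := k)
    simp only [w]
    split_ifs <;> omega
  refine ⟨w, by simp [w], by simp [w], hwk,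
    fun t x => (M t x).submatrix (Fin.castLE (hwk _)) (Fin.castLE (hwk _)), ?_⟩
  rw [computes_iff_of_eq_submatrix hwk M _ (fun _ _ => rfl)]
  intro j
  rw [hM j, wordProd, Matrix.list_prod_ofFn_apply]
  refine Finset.sum_congr rfl fun u _ => if_congr ⟨fun ⟨h0, hd⟩ ℓ => ?_, fun hu => ?_⟩ rfl rfl
  · simp only [w]
    split_ifs with hℓ
    · rcases hℓ with rfl | rfl <;> simp [h0, hd]
    · exact (u ℓ).2
  · exact ⟨Fin.ext (by simpa [w] using hu 0), Fin.ext (by simpa [w] using hu (Fin.last d))⟩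

theorem widthLe_iff_exists_wordProd {k : ℕ} [NeZero k] (f : (Fin d → Fin n) → ℂ) :
    WidthLe d n k f ↔
      ∃ M : Fin d → Fin n → Matrix (Fin k) (Fin k) ℂ, ∀ j, f j = wordProd M j 0 0 :=
  ⟨exists_forall_eq_wordProd_of_widthLe, fun ⟨M, hM⟩ => widthLe_of_forall_eq_wordProd M hM⟩

theorem not_widthLe_zero (f : (Fin d → Fin n) → ℂ) : ¬ WidthLe d n 0 f := by
  rintro ⟨w, hw0, -, hwk, -⟩
  have := hwk 0
  omega

theorem widthLe_zero_iff {k : ℕ} [NeZero k] (f : (Fin 0 → Fin n) → ℂ) :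
    WidthLe 0 n k f ↔ f = 1 := by
  simp [widthLe_iff_exists_wordProd, wordProd, funext_iff]

def residual {R : Type*} [CommSemiring R] {m m' : ℕ} (h : m' = m + 1) (x : Fin n) :
    ((Fin m' → Fin n) → R) →ₗ[R] ((Fin m → Fin n) → R) :=
  LinearMap.funLeft R R fun c => (Fin.cons x c : Fin (m + 1) → Fin n) ∘ Fin.cast h

variable (f : (Fin d → Fin n) → ℂ)

def rowSpan (i : ℕ) (hi : i ≤ d) : Submodule ℂ ((Fin (d - i) → Fin n) → ℂ) :=
  Submodule.span ℂ (Set.range (flatten d n f i hi).row)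

theorem flatten_last (j : Fin d → Fin n) (c : Fin (d - d) → Fin n) :
    flatten d n f d le_rfl j c = f j := by
  simp only [flatten, Matrix.of_apply]
  congr 1
  apply List.ofFn_injective
  rw [List.ofFn_comp_cast, List.ofFn_fin_append, List.ofFn_eq_nil_iff.mpr (Nat.sub_self d),
    List.append_nil]

theorem flatten_snoc {i : ℕ} (hi : i + 1 ≤ d) (r : Fin i → Fin n) (x : Fin n) :
    flatten d n f (i + 1) hi (Fin.snoc r x) =
      residual (by omega) x (flatten d n f i (by omega) r) := by
  funext c
  simp only [flatten, Matrix.of_apply, residual, LinearMap.funLeft_apply]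
  congr 1
  apply List.ofFn_injective
  simp [List.ofFn_comp_cast, List.ofFn_fin_snoc, -List.ofFn_succ, List.ofFn_cons]

theorem residual_mem_rowSpan {i : ℕ} (hi : i + 1 ≤ d) (x : Fin n) {u : (Fin (d - i) → Fin n) → ℂ}
    (hu : u ∈ rowSpan f i (by omega)) : residual (by omega) x u ∈ rowSpan f (i + 1) hi := by
  have hmap : (rowSpan f i (by omega)).map (residual (by omega) x) ≤ rowSpan f (i + 1) hi := by
    rw [rowSpan, Submodule.map_span, Submodule.span_le]
    rintro _ ⟨_, ⟨r, rfl⟩, rfl⟩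
    exact Submodule.subset_span ⟨Fin.snoc r x, flatten_snoc f hi r x⟩
  exact hmap (Submodule.mem_map_of_mem hu)

theorem rank_flatten_le_of_forall_eq_wordProd {k : ℕ} [NeZero k]
    (M : Fin d → Fin n → Matrix (Fin k) (Fin k) ℂ) (hM : ∀ j, f j = wordProd M j 0 0)
    (i : ℕ) (hi : i ≤ d) : (flatten d n f i hi).rank ≤ k := by
  have hid : i + (d - i) = d := by omega
  have hfac : flatten d n f i hi =
      Matrix.of (fun r a => wordProd (fun t => M (Fin.cast hid (Fin.castAdd _ t))) r 0 a) *
        Matrix.of (fun a c => wordProd (fun t => M (Fin.cast hid (Fin.natAdd i t))) c a 0) := by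
    ext r c
    simp only [flatten, Matrix.of_apply, hM, wordProd_append hid, Matrix.mul_apply]
  rw [hfac]
  exact (Matrix.rank_mul_le_left _ _).trans ((Matrix.rank_le_card_width _).trans (by simp))

theorem flatten_eq_sum_wordProd_smul {k : ℕ} [NeZero k]
    (B : ∀ i, i ≤ d → Fin k → (Fin (d - i) → Fin n) → ℂ)
    (M : Fin d → Fin n → Matrix (Fin k) (Fin k) ℂ)
    (h0 : ∀ r, flatten d n f 0 (Nat.zero_le d) r = B 0 (Nat.zero_le d) 0)
    (hM : ∀ i (hi : i < d) x a,
      residual (by omega) x (B i hi.le a) = ∑ b, M ⟨i, hi⟩ x a b • B (i + 1) hi b)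
    (i : ℕ) (hi : i ≤ d) (r : Fin i → Fin n) :
    flatten d n f i hi r = ∑ a, wordProd (fun t => M (Fin.castLE hi t)) r 0 a • B i hi a := by
  induction i with
  | zero => simp [h0 r, wordProd, Matrix.one_apply]
  | succ i ih =>
    rw [← Fin.snoc_init_self r, flatten_snoc, ih, map_sum, wordProd_snoc]
    simp only [map_smul, hM i hi, Matrix.mul_apply, Finset.smul_sum, Finset.sum_smul, smul_smul]
    exact Finset.sum_comm

/-- At the source the family is `(f, 0, …, 0)` and at the sink `(1, 0, …, 0)`, so that the value
of `f` is read off at entry `(0, 0)` of the resulting matrix product. -/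
theorem exists_families_residual_mem_span {k : ℕ} [NeZero k] (hd : 0 < d)
    (hf : ∀ i hi, (flatten d n f i hi).rank ≤ k) :
    ∃ B : ∀ i, i ≤ d → Fin k → (Fin (d - i) → Fin n) → ℂ,
      (∀ r, flatten d n f 0 (Nat.zero_le d) r = B 0 (Nat.zero_le d) 0) ∧
      B d le_rfl = Pi.single 0 1 ∧
      ∀ i (hi : i < d) x a,
        residual (by omega) x (B i hi.le a) ∈ Submodule.span ℂ (Set.range (B (i + 1) hi)) := by
  choose G hG using fun i hi => (rowSpan f i hi).exists_fin_span_range_eq_of_finrank_le (k := k)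
    (by rw [rowSpan, ← Matrix.rank_eq_finrank_span_row]; exact hf i hi)
  let B : ∀ i, i ≤ d → Fin k → (Fin (d - i) → Fin n) → ℂ := fun i hi =>
    if h0 : i = 0 then Pi.single 0 (flatten d n f i hi fun t => (t.cast h0).elim0)
    else if i = d then Pi.single 0 1 else G i hi
  have hB_mem (i : ℕ) (hi : i < d) (a : Fin k) : B i hi.le a ∈ rowSpan f i hi.le := by
    rcases Nat.eq_zero_or_pos i with rfl | hi0
    · rcases eq_or_ne a 0 with rfl | ha
      · simp only [B, dif_pos rfl, Pi.single_eq_same]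
        exact Submodule.subset_span ⟨_, rfl⟩
      · simp [B, ha]
    · simp only [B, dif_neg hi0.ne', if_neg hi.ne, ← hG i hi.le]
      exact Submodule.subset_span ⟨a, rfl⟩
  refine ⟨B, fun r => ?_, by simp [B, hd.ne'], fun i hi x a => ?_⟩
  · simp only [B, dif_pos rfl, Pi.single_eq_same]
    exact congrArg _ (Subsingleton.elim _ _)
  by_cases hid : i + 1 = d
  · have : IsEmpty (Fin (d - (i + 1))) := by rw [← hid, Nat.sub_self]; infer_instance
    generalize residual _ x (B i hi.le a) = u
    simp only [B, dif_neg (Nat.succ_ne_zero i), if_pos hid]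
    have hu : u = u default • (Pi.single 0 1 : Fin k → (Fin (d - (i + 1)) → Fin n) → ℂ) 0 := by
      funext c
      simp [Unique.eq_default c]
    rw [hu]
    exact Submodule.smul_mem _ _ (Submodule.subset_span ⟨0, rfl⟩)
  · simp only [B, dif_neg (Nat.succ_ne_zero i), if_neg hid, hG]
    exact residual_mem_rowSpan f hi x (hB_mem i hi a)

theorem exists_forall_eq_wordProd_of_rank_flatten_le {k : ℕ} [NeZero k] (hd : 0 < d)
    (hf : ∀ i hi, (flatten d n f i hi).rank ≤ k) :
    ∃ M : Fin d → Fin n → Matrix (Fin k) (Fin k) ℂ, ∀ j, f j = wordProd M j 0 0 := by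
  obtain ⟨B, hsource, hsink, hstep⟩ := exists_families_residual_mem_span f hd hf
  choose c hc using fun i hi x a => (Submodule.mem_span_range_iff_exists_fun ℂ).mp (hstep i hi x a)
  let M : Fin d → Fin n → Matrix (Fin k) (Fin k) ℂ := fun t x => Matrix.of (c t t.2 x)
  refine ⟨M, fun j => ?_⟩
  have hrow := flatten_eq_sum_wordProd_smul f B M hsource (fun i hi x a => (hc i hi x a).symm)
    d le_rfl j
  have c₀ : Fin (d - d) → Fin n := fun t => (t.cast (Nat.sub_self d)).elim0
  rw [← flatten_last f j c₀, hrow, Finset.sum_apply, hsink]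
  simp [Pi.single_apply, ite_apply]

theorem continuous_flatten (i : ℕ) (hi : i ≤ d) :
    Continuous fun f : (Fin d → Fin n) → ℂ => flatten d n f i hi :=
  continuous_pi fun _ => continuous_pi fun _ => continuous_apply _

theorem widthLe_iff_forall_rank_flatten_le {k : ℕ} [NeZero k] (hd : 0 < d)
    (f : (Fin d → Fin n) → ℂ) :
    WidthLe d n k f ↔ ∀ i hi, (flatten d n f i hi).rank ≤ k := by
  rw [widthLe_iff_exists_wordProd]
  exact ⟨fun ⟨M, hM⟩ => rank_flatten_le_of_forall_eq_wordProd f M hM,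
    exists_forall_eq_wordProd_of_rank_flatten_le f hd⟩

end Nisan

/-- The set of tensors computed by some single-(source,sink) ABP
of width at most `k` is closed in the standard topology; in particular border
single-(source,sink) ABP width complexity equals single-(source,sink) ABP width
complexity: membership in the closure is equivalent to membership. -/
theorem widthLe_isClosed (d n k : ℕ) :
    IsClosed {f : (Fin d → Fin n) → ℂ | Nisan.WidthLe d n k f} ∧
    ∀ f : (Fin d → Fin n) → ℂ,
      f ∈ closure {g : (Fin d → Fin n) → ℂ | Nisan.WidthLe d n k g} ↔
        Nisan.WidthLe d n k f := by
  have hclosed : IsClosed {f : (Fin d → Fin n) → ℂ | Nisan.WidthLe d n k f} := by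
    rcases Nat.eq_zero_or_pos k with rfl | hk
    · simp [Nisan.not_widthLe_zero]
    have : NeZero k := ⟨hk.ne'⟩
    rcases Nat.eq_zero_or_pos d with rfl | hd
    · simp only [Nisan.widthLe_zero_iff, Set.ofPred_eq_eq_singleton]
      exact isClosed_singleton
    · simp only [Nisan.widthLe_iff_forall_rank_flatten_le hd, Set.ofPred_forall]
      exact isClosed_iInter fun i => isClosed_iInter fun hi =>
        (Matrix.isClosed_setOfPred_rank_le k).preimage (Nisan.continuous_flatten i hi)
  exact ⟨hclosed, fun f => by rw [hclosed.closure_eq, Set.mem_ofPred_eq]⟩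
end

section
/- If a tensor f : (Fin d → Fin n) → ℂ is computed by a trace ABP of format (w_0, w_1, …, w_{d−1}), then f is computed by a single-(source,sink) ABP of format (1, w_0·w_1, w_0·w_2, …, w_0·w_{d−1}, 1). In particular, the single-(source,sink) ABP width complexity of f is at most the square of its trace ABP width complexity. -/
open scoped BigOperators

namespace Nisan

/-- A trace ABP of format `(w 0, …, w (d-1))` computes the coefficient tensor `f`
if for every monomial `j : Fin d → Fin n` the value `f j` equals the trace of the
matrix product `T 0 (j 0) * ⋯ * T (d-1) (j (d-1))`, written here as the sum over
all closed paths of the products of the corresponding matrix entries. -/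
def TraceComputes (d n : ℕ) [NeZero d] (w : Fin d → ℕ)
    (T : ∀ k : Fin d, Fin n → Matrix (Fin (w k)) (Fin (w (k + 1))) ℂ)
    (f : (Fin d → Fin n) → ℂ) : Prop :=
  ∀ j : Fin d → Fin n,
    f j = ∑ v : ∀ k : Fin d, Fin (w k), ∏ k : Fin d, T k (j k) (v k) (v (k + 1))

/-- The format `(1, w 0 · w 1, w 0 · w 2, …, w 0 · w (d-1), 1)`. -/
def squareFormat (d : ℕ) [NeZero d] (w : Fin d → ℕ) : Fin (d + 1) → ℕ :=
  fun i => if h : i.val = 0 ∨ i.val = d then 1 else w 0 * w ⟨i.val, by omega⟩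

end Nisan

/-!
Write `A_k = T k (j k)`. Then `trace (A_0 ⋯ A_{d-1}) = ∑ₐ (A_0 ⋯ A_{d-1})ₐₐ`, and all `w 0` of
these open paths can run in parallel in one ABP whose inner vertices are pairs `(a, b)`: the
inner layers act as `1 ⊗ A_k`, so `a` is carried along unchanged, the first layer sends the source
to `(a, ·)` through row `a` of `A_0`, and the last layer returns from `(a, ·)` to the sink through
column `a` of `A_{d-1}`. The source-to-sink paths of nonzero weight are then exactly the closed
paths of the trace ABP, with the same weights.
-/

namespace Nisan

theorem cast_apply_of_eq {ι : Type*} {w : ι → ℕ} (u : ∀ k : ι, Fin (w k)) {k k' : ι}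
    (h : k = k') :
    Fin.cast (congrArg w h) (u k) = u k' := by
  subst h
  rfl

theorem val_succ_eq_val_add_one {m : ℕ} {k : Fin (m + 1)} (hl : k ≠ Fin.last m) :
    k.succ.val = (k + 1).val := by
  rw [Fin.val_succ, Fin.val_add_one_of_lt (Fin.lt_last_iff_ne_last.mpr hl)]

theorem add_one_ne_zero_of_ne_last {m : ℕ} {k : Fin (m + 1)} (hl : k ≠ Fin.last m) :
    k + 1 ≠ 0 := by
  rw [Ne, Fin.ext_iff, Fin.val_add_one_of_lt (Fin.lt_last_iff_ne_last.mpr hl)]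
  simp

theorem squareFormat_eq_one {d : ℕ} [NeZero d] (w : Fin d → ℕ) {i : Fin (d + 1)}
    (hi : i.val = 0 ∨ i.val = d) : squareFormat d w i = 1 :=
  dif_pos hi

section Unrolling

variable {m : ℕ} (w : Fin (m + 2) → ℕ)

theorem squareFormat_eq_mul {i : Fin (m + 3)} {k : Fin (m + 2)} (hik : i.val = k.val)
    (hk : k ≠ 0) : squareFormat (m + 2) w i = w 0 * w k := by
  have hk' : k.val ≠ 0 := Fin.val_ne_of_ne hk
  rw [squareFormat, dif_neg (by omega)]
  congr

-- `k` is the position `i` in the closed path, passed separately so that layers can be matched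
-- with both `k` and `k + 1` without casting.
def layerEquiv (i : Fin (m + 3)) (k : Fin (m + 2)) (hik : i.val = k.val) (hk : k ≠ 0) :
    Fin (squareFormat (m + 2) w i) ≃ Fin (w 0) × Fin (w k) :=
  (finCongr (squareFormat_eq_mul w hik hk)).trans finProdFinEquiv.symm

theorem fst_layerEquiv_congr (v : ∀ i : Fin (m + 3), Fin (squareFormat (m + 2) w i))
    {i i' : Fin (m + 3)} {k k' : Fin (m + 2)} (hi : i = i') (hik : i.val = k.val) (hk : k ≠ 0)
    (hik' : i'.val = k'.val) (hk' : k' ≠ 0) :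
    (layerEquiv w i k hik hk (v i)).1 = (layerEquiv w i' k' hik' hk' (v i')).1 := by
  subst hi
  obtain rfl : k = k' := Fin.ext (hik.symm.trans hik')
  rfl

def encodePath (u : ∀ k : Fin (m + 2), Fin (w k)) (i : Fin (m + 3)) :
    Fin (squareFormat (m + 2) w i) :=
  if h : 0 < i.val ∧ i.val < m + 2 then
    (layerEquiv w i ⟨i.val, h.2⟩ rfl (Fin.ne_of_val_ne h.1.ne')).symm (u 0, u ⟨i.val, h.2⟩)
  else Fin.cast (squareFormat_eq_one w (by omega)).symm 0

theorem layerEquiv_encodePath (u : ∀ k : Fin (m + 2), Fin (w k)) {i : Fin (m + 3)}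
    {k : Fin (m + 2)} (hik : i.val = k.val) (hk : k ≠ 0) :
    layerEquiv w i k hik hk (encodePath w u i) = (u 0, u k) := by
  have hi : 0 < i.val ∧ i.val < m + 2 :=
    ⟨hik ▸ Nat.pos_of_ne_zero (Fin.val_ne_of_ne hk), hik ▸ k.isLt⟩
  obtain rfl : (⟨i.val, hi.2⟩ : Fin (m + 2)) = k := Fin.ext hik
  rw [encodePath, dif_pos hi, Equiv.apply_symm_apply]

def decodePath (v : ∀ i : Fin (m + 3), Fin (squareFormat (m + 2) w i)) (k : Fin (m + 2)) :
    Fin (w k) :=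
  if hk : k = 0 then
    Fin.cast (congrArg w hk.symm) (layerEquiv w (Fin.castSucc 1) 1 rfl one_ne_zero (v _)).1
  else (layerEquiv w k.castSucc k rfl hk (v k.castSucc)).2

theorem decodePath_encodePath (u : ∀ k : Fin (m + 2), Fin (w k)) :
    decodePath w (encodePath w u) = u := by
  funext k
  by_cases hk : k = 0
  · subst hk
    rw [decodePath, dif_pos rfl, layerEquiv_encodePath, Fin.cast_eq_self]
  · rw [decodePath, dif_neg hk, layerEquiv_encodePath]

variable {R : Type*} {n : ℕ}
  (T : ∀ k : Fin (m + 2), Fin n → Matrix (Fin (w k)) (Fin (w (k + 1))) R)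

section Zero

variable [Zero R]

def singleOfTrace (k : Fin (m + 2)) (x : Fin n) :
    Matrix (Fin (squareFormat (m + 2) w k.castSucc)) (Fin (squareFormat (m + 2) w k.succ)) R :=
  Matrix.of fun p q =>
    if h0 : k = 0 then
      have hl : k ≠ Fin.last (m + 1) := h0 ▸ Fin.last_pos.ne
      T k x (Fin.cast (congrArg w h0.symm) (layerEquiv w k.succ (k + 1)
          (val_succ_eq_val_add_one hl) (add_one_ne_zero_of_ne_last hl) q).1)
        (layerEquiv w k.succ (k + 1) (val_succ_eq_val_add_one hl)
          (add_one_ne_zero_of_ne_last hl) q).2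
    else if hl : k = Fin.last (m + 1) then
      T k x (layerEquiv w k.castSucc k rfl h0 p).2
        (Fin.cast (congrArg w (by rw [hl, Fin.last_add_one]))
          (layerEquiv w k.castSucc k rfl h0 p).1)
    else if (layerEquiv w k.castSucc k rfl h0 p).1 = (layerEquiv w k.succ (k + 1)
        (val_succ_eq_val_add_one hl) (add_one_ne_zero_of_ne_last hl) q).1 then
      T k x (layerEquiv w k.castSucc k rfl h0 p).2 (layerEquiv w k.succ (k + 1)
        (val_succ_eq_val_add_one hl) (add_one_ne_zero_of_ne_last hl) q).2
    else 0

theorem singleOfTrace_encodePath (u : ∀ k : Fin (m + 2), Fin (w k)) (k : Fin (m + 2))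
    (x : Fin n) :
    singleOfTrace w T k x (encodePath w u k.castSucc) (encodePath w u k.succ) =
      T k x (u k) (u (k + 1)) := by
  simp only [singleOfTrace, Matrix.of_apply, layerEquiv_encodePath, if_true]
  split_ifs with h0 hl
  · rw [cast_apply_of_eq u h0.symm]
  · rw [cast_apply_of_eq u (by rw [hl, Fin.last_add_one] : 0 = k + 1)]
  · rfl

theorem fst_layerEquiv_eq_of_singleOfTrace_ne_zero {k : Fin (m + 2)} (h0 : k ≠ 0)
    (hl : k ≠ Fin.last (m + 1)) {x : Fin n} {p : Fin (squareFormat (m + 2) w k.castSucc)}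
    {q : Fin (squareFormat (m + 2) w k.succ)} (h : singleOfTrace w T k x p q ≠ 0) :
    (layerEquiv w k.castSucc k rfl h0 p).1 = (layerEquiv w k.succ (k + 1)
      (val_succ_eq_val_add_one hl) (add_one_ne_zero_of_ne_last hl) q).1 := by
  rw [singleOfTrace, Matrix.of_apply, dif_neg h0, dif_neg hl] at h
  by_contra hne
  exact h (if_neg hne)

variable {w T} {x : Fin (m + 2) → Fin n}
  {v : ∀ i : Fin (m + 3), Fin (squareFormat (m + 2) w i)}

theorem fst_layerEquiv_eq_of_forall_ne_zero
    (hv : ∀ k, singleOfTrace w T k (x k) (v k.castSucc) (v k.succ) ≠ 0) {i i' : Fin (m + 3)}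
    {k k' : Fin (m + 2)} (hik : i.val = k.val) (hk : k ≠ 0) (hik' : i'.val = k'.val)
    (hk' : k' ≠ 0) :
    (layerEquiv w i k hik hk (v i)).1 = (layerEquiv w i' k' hik' hk' (v i')).1 := by
  suffices h : ∀ (t : ℕ) (i : Fin (m + 3)) (k : Fin (m + 2)) (hik : i.val = k.val)
      (hk : k ≠ 0), k.val = t + 1 → (layerEquiv w i k hik hk (v i)).1 =
        (layerEquiv w (Fin.castSucc 1) 1 rfl one_ne_zero (v _)).1 by
    obtain ⟨t, ht⟩ := Nat.exists_eq_add_one_of_ne_zero (Fin.val_ne_of_ne hk)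
    obtain ⟨t', ht'⟩ := Nat.exists_eq_add_one_of_ne_zero (Fin.val_ne_of_ne hk')
    exact (h t i k hik hk ht).trans (h t' i' k' hik' hk' ht').symm
  intro t
  induction t with
  | zero =>
    intro i k hik hk ht
    exact fst_layerEquiv_congr w v (Fin.ext (by simp; omega)) _ _ _ _
  | succ t ih =>
    intro i k hik hk ht
    have hlt : t + 1 < m + 2 := by omega
    have h0 : (⟨t + 1, hlt⟩ : Fin (m + 2)) ≠ 0 := Fin.ne_of_val_ne t.succ_ne_zero
    have hl : (⟨t + 1, hlt⟩ : Fin (m + 2)) ≠ Fin.last (m + 1) :=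
      Fin.ne_of_val_ne (show t + 1 ≠ m + 1 by omega)
    rw [fst_layerEquiv_congr w v (Fin.ext (by simp; omega)) hik hk (val_succ_eq_val_add_one hl)
        (add_one_ne_zero_of_ne_last hl),
      ← fst_layerEquiv_eq_of_singleOfTrace_ne_zero w T h0 hl (hv _)]
    exact ih _ _ rfl h0 rfl

theorem encodePath_decodePath
    (hv : ∀ k, singleOfTrace w T k (x k) (v k.castSucc) (v k.succ) ≠ 0) :
    encodePath w (decodePath w v) = v := by
  funext i
  by_cases hi : 0 < i.val ∧ i.val < m + 2
  · have hk : (⟨i.val, hi.2⟩ : Fin (m + 2)) ≠ 0 := Fin.ne_of_val_ne hi.1.ne'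
    rw [encodePath, dif_pos hi, Equiv.symm_apply_eq, Prod.ext_iff, decodePath, decodePath,
      dif_pos rfl, dif_neg hk]
    exact ⟨(Fin.cast_eq_self _).trans (fst_layerEquiv_eq_of_forall_ne_zero hv _ _ _ _), rfl⟩
  · have : Subsingleton (Fin (squareFormat (m + 2) w i)) := by
      rw [squareFormat_eq_one w (by omega)]
      infer_instance
    exact Subsingleton.elim _ _

end Zero

theorem sum_prod_singleOfTrace [CommSemiring R] (x : Fin (m + 2) → Fin n) :
    ∑ v : ∀ i, Fin (squareFormat (m + 2) w i),
        ∏ k, singleOfTrace w T k (x k) (v k.castSucc) (v k.succ) =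
      ∑ u : ∀ k, Fin (w k), ∏ k, T k (x k) (u k) (u (k + 1)) := by
  symm
  refine Fintype.sum_of_injective (encodePath w)
    (Function.LeftInverse.injective (decodePath_encodePath w)) _ _
    (fun v hv => ?_) (fun u => by simp only [singleOfTrace_encodePath])
  by_contra hne
  refine hv ⟨_, encodePath_decodePath (T := T) (x := x) fun k hk => hne ?_⟩
  exact Finset.prod_eq_zero (Finset.mem_univ k) hk

end Unrolling

theorem computes_singleOfTrace {m n : ℕ} {w : Fin (m + 2) → ℕ}
    {T : ∀ k : Fin (m + 2), Fin n → Matrix (Fin (w k)) (Fin (w (k + 1))) ℂ}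
    {f : (Fin (m + 2) → Fin n) → ℂ} (hT : TraceComputes (m + 2) n w T f) :
    Computes (m + 2) n (squareFormat (m + 2) w) (singleOfTrace w T) f :=
  fun j => (hT j).trans (sum_prod_singleOfTrace w T j).symm

theorem computes_trace_of_traceComputes_one {n : ℕ} {w : Fin 1 → ℕ}
    {T : ∀ k : Fin 1, Fin n → Matrix (Fin (w k)) (Fin (w (k + 1))) ℂ}
    {f : (Fin 1 → Fin n) → ℂ} (hT : TraceComputes 1 n w T f) :
    Computes 1 n (squareFormat 1 w) (fun _ x => Matrix.of fun _ _ => (T 0 x).trace) f := by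
  have : ∀ i, Subsingleton (Fin (squareFormat 1 w i)) := fun i => by
    rw [squareFormat_eq_one w (by omega)]
    infer_instance
  intro j
  rw [hT j, Fintype.sum_subsingleton _ fun i => Fin.cast (squareFormat_eq_one w (by omega)).symm 0]
  simp only [Fin.prod_univ_one, Matrix.of_apply, Matrix.trace]
  exact Fintype.sum_equiv (Equiv.piUnique _) _ _ fun _ => rfl

end Nisan

/-- If `f` is computed by a trace ABP of format
`(w 0, …, w (d-1))` then it is computed by a single-(source,sink) ABP of format
`(1, w 0 · w 1, …, w 0 · w (d-1), 1)`. -/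
theorem trace_to_single (d n : ℕ) [NeZero d] (w : Fin d → ℕ)
    (T : ∀ k : Fin d, Fin n → Matrix (Fin (w k)) (Fin (w (k + 1))) ℂ)
    (f : (Fin d → Fin n) → ℂ) (hT : Nisan.TraceComputes d n w T f) :
    ∃ T' : ∀ k : Fin d, Fin n →
        Matrix (Fin (Nisan.squareFormat d w k.castSucc)) (Fin (Nisan.squareFormat d w k.succ)) ℂ,
      Nisan.Computes d n (Nisan.squareFormat d w) T' f := by
  obtain _ | _ | m := d
  · exact absurd rfl (NeZero.ne 0)
  · exact ⟨_, Nisan.computes_trace_of_traceComputes_one hT⟩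
  · exact ⟨_, Nisan.computes_singleOfTrace hT⟩
end

section
/- For every n ≥ 1, d ≥ 1 and every format (1, w_1, …, w_{d−1}, 1) with all w_i ≥ 1, the set of homogeneous degree-d polynomials in n variables computable by a monotone single-(source,sink) ABP of that format, regarded (via real coefficient vectors) as a subset of the complex coefficient space ℂ^{Mon(n,d)}, is not Zariski-closed: there is no set of polynomial functions on ℂ^{Mon(n,d)} whose common zero locus equals this set. -/
open scoped BigOperators

attribute [local instance] Classical.propDecidable

namespace MonABP

/-- The index set `Mon(n,d)` of degree-`d` monomials in `n` variables, encoded as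
exponent vectors of total degree `d`. -/
abbrev Mon (n d : ℕ) : Type := {m : Fin n →₀ ℕ // (m.sum fun _ e => e) = d}

/-- The coefficient, at the monomial (exponent vector) `m`, of the homogeneous
degree-`d` polynomial computed by the single-(source,sink) ABP of format `w` whose
edge labels are the homogeneous linear forms with coefficient vectors
`L k a b : Fin n → ℝ` (entry `(a,b)` of the `k`-th matrix is `Σ_t L k a b t · x_t`):
it is obtained by expanding the product of the label matrices and summing the
contributions of all source-to-sink paths. -/
noncomputable def monCoeff (d n : ℕ) (w : Fin (d + 1) → ℕ)
    (L : ∀ k : Fin d, Fin (w k.castSucc) → Fin (w k.succ) → Fin n → ℝ)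
    (m : Fin n →₀ ℕ) : ℝ :=
  ∑ v : ∀ k : Fin (d + 1), Fin (w k),
    ∑ t : Fin d → Fin n,
      if (∑ k : Fin d, Finsupp.single (t k) 1) = m
      then ∏ k : Fin d, L k (v k.castSucc) (v k.succ) (t k) else 0

/-- The set of coefficient vectors (regarded inside the complex coefficient space
`ℂ^{Mon(n,d)}`) of polynomials computable by a monotone single-(source,sink) ABP
of format `w`: all label coefficients are nonnegative reals. -/
def MonotoneComputable (d n : ℕ) (w : Fin (d + 1) → ℕ) : Set (Mon n d → ℂ) :=
  {c | ∃ L : ∀ k : Fin d, Fin (w k.castSucc) → Fin (w k.succ) → Fin n → ℝ,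
    (∀ k a b t, 0 ≤ L k a b t) ∧
    ∀ m : Mon n d, c m = (monCoeff d n w L m.val : ℂ)}

end MonABP

/-!
Monotone ABPs only produce coefficients that are nonnegative reals, yet the set contains the
whole ray `{r • e | r ≥ 0}`, where `e` is the coefficient vector of `x₀ ^ d`: put the label
`r ^ (1 / d) • x₀` on every edge of one source-to-sink path. A polynomial vanishing at infinitely
many points of the line `ℂ • e` vanishes on all of it, so every Zariski-closed set containing the
monotone set also contains `-e`, which is not monotonically computable.
-/

namespace MvPolynomial

variable {R σ : Type*} [CommRing R] [IsDomain R]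

theorem eval_smul_eq_zero_of_infinite {P : MvPolynomial σ R} {v : σ → R} {T : Set R}
    (hT : T.Infinite) (hP : ∀ z ∈ T, eval (z • v) P = 0) (z : R) : eval (z • v) P = 0 := by
  set Q : Polynomial R := eval₂ Polynomial.C (fun i => Polynomial.C (v i) * Polynomial.X) P
  have hQ : ∀ z, Q.eval z = eval (z • v) P := fun z => by
    simp only [Q, polynomial_eval_eval₂, Polynomial.eval_mul, Polynomial.eval_C, Polynomial.eval_X]
    rw [← eval₂_id]
    congr 1
    · ext; simp
    · funext i; simp [mul_comm]
  have hQ0 : Q = 0 := Polynomial.eq_zero_of_infinite_isRoot Q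
    (hT.mono fun z hz => by simpa [Polynomial.IsRoot, hQ] using hP z hz)
  rw [← hQ, hQ0, Polynomial.eval_zero]

end MvPolynomial

theorem Fin.forall_castSucc_succ_eq_iff {d : ℕ} (hd : 0 < d) {α : Fin (d + 1) → Type*}
    {v u : ∀ k, α k} :
    ((∀ k : Fin d, v k.castSucc = u k.castSucc) ∧ ∀ k : Fin d, v k.succ = u k.succ) ↔ v = u := by
  refine ⟨fun h => funext fun j => Fin.cases ?_ h.2 j, fun h => by simp [h]⟩
  simpa using h.1 ⟨0, hd⟩

namespace MonABP

noncomputable def Mon.single {n : ℕ} (i : Fin n) (d : ℕ) : Mon n d :=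
  ⟨Finsupp.single i d, by simp⟩

variable {d n : ℕ} {w : Fin (d + 1) → ℕ}

def pathLabels (v : ∀ k, Fin (w k)) (i : Fin n) (μ : ℝ) :
    ∀ k : Fin d, Fin (w k.castSucc) → Fin (w k.succ) → Fin n → ℝ :=
  fun k a b t => if a = v k.castSucc ∧ b = v k.succ ∧ t = i then μ else 0

theorem monCoeff_pathLabels (hd : 0 < d) (v : ∀ k, Fin (w k)) (i : Fin n) (μ : ℝ)
    (m : Fin n →₀ ℕ) :
    monCoeff d n w (pathLabels v i μ) m = if m = Finsupp.single i d then μ ^ d else 0 := by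
  simp only [monCoeff, pathLabels, Fintype.prod_ite_zero, forall_and, ← and_assoc,
    Fin.forall_castSucc_succ_eq_iff hd]
  simp only [← funext_iff]
  rw [Fintype.sum_eq_single v fun x hx => by simp [hx],
    Fintype.sum_eq_single (fun _ => i) fun t ht => by simp [ht]]
  simp [eq_comm]

theorem monCoeff_nonneg {L : ∀ k : Fin d, Fin (w k.castSucc) → Fin (w k.succ) → Fin n → ℝ}
    (hL : ∀ k a b t, 0 ≤ L k a b t) (m : Fin n →₀ ℕ) : 0 ≤ monCoeff d n w L m :=
  Finset.sum_nonneg fun _ _ => Finset.sum_nonneg fun _ _ => by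
    split_ifs
    exacts [Finset.prod_nonneg fun _ _ => hL _ _ _ _, le_rfl]

theorem re_nonneg_of_mem_monotoneComputable {c : Mon n d → ℂ}
    (hc : c ∈ MonotoneComputable d n w) (m : Mon n d) : 0 ≤ (c m).re := by
  obtain ⟨L, hL, hcL⟩ := hc
  simpa [hcL] using monCoeff_nonneg hL m.val

theorem ofReal_smul_single_mem_monotoneComputable (hd : 0 < d) (v : ∀ k, Fin (w k))
    (i : Fin n) {r : ℝ} (hr : 0 ≤ r) :
    (r : ℂ) • Pi.single (Mon.single i d) 1 ∈ MonotoneComputable d n w := by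
  refine ⟨pathLabels v i (r ^ (d⁻¹ : ℝ)), fun k a b t => ?_, fun m => ?_⟩
  · unfold pathLabels
    split_ifs <;> positivity
  · rw [monCoeff_pathLabels hd, Real.rpow_inv_natCast_pow hr hd.ne']
    simp [Pi.single_apply, Mon.single, Subtype.ext_iff, apply_ite ((↑) : ℝ → ℂ)]

end MonABP

theorem monotone_abp_set_not_zariski_closed_general (n d : ℕ) (hn : 1 ≤ n) (hd : 1 ≤ d)
    (w : Fin (d + 1) → ℕ) (hw : ∀ i, 1 ≤ w i) :
    ¬ ∃ I : Set (MvPolynomial (MonABP.Mon n d) ℂ),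
        MonABP.MonotoneComputable d n w =
          {c : MonABP.Mon n d → ℂ | ∀ P ∈ I, MvPolynomial.eval c P = 0} := by
  rintro ⟨I, hI⟩
  set e : MonABP.Mon n d → ℂ := Pi.single (MonABP.Mon.single ⟨0, hn⟩ d) 1
  have hline : ∀ z : ℂ, z • e ∈ MonABP.MonotoneComputable d n w := by
    rw [hI]
    intro z P hP
    refine MvPolynomial.eval_smul_eq_zero_of_infinite
      ((Set.Ici_infinite 0).image Complex.ofReal_injective.injOn) ?_ z
    rintro _ ⟨r, hr, rfl⟩
    have hray :=
      MonABP.ofReal_smul_single_mem_monotoneComputable hd (fun k => ⟨0, hw k⟩) ⟨0, hn⟩ hr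
    rw [hI] at hray
    exact hray P hP
  have hneg :=
    MonABP.re_nonneg_of_mem_monotoneComputable (hline (-1)) (MonABP.Mon.single ⟨0, hn⟩ d)
  norm_num [e] at hneg

/-- For every `n ≥ 1`, `d ≥ 1` and every format
`(1, w 1, …, w (d-1), 1)` with all widths positive, the set of homogeneous
degree-`d` polynomials computable by a monotone single-(source,sink) ABP of that
format, viewed inside the complex coefficient space `ℂ^{Mon(n,d)}`, is not
Zariski-closed: it is not the common zero locus of any set of polynomial
functions on `ℂ^{Mon(n,d)}`. -/
theorem monotone_abp_set_not_zariski_closed (n d : ℕ) (hn : 1 ≤ n) (hd : 1 ≤ d)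
    (w : Fin (d + 1) → ℕ) (h0 : w 0 = 1) (hlast : w (Fin.last d) = 1)
    (hw : ∀ i, 1 ≤ w i) :
    ¬ ∃ I : Set (MvPolynomial (MonABP.Mon n d) ℂ),
        MonABP.MonotoneComputable d n w =
          {c : MonABP.Mon n d → ℂ | ∀ P ∈ I, MvPolynomial.eval c P = 0} :=
  monotone_abp_set_not_zariski_closed_general n d hn hd w hw
end

section
/- Let f ∈ ℝ[x_1, …, x_n]. Suppose there is a single-(source,sink) ABP of format (1, w_1, …, w_{d−1}, 1) with affine linear labels over ℝ[ε,ε^{−1}]_+ computing a polynomial f' ∈ ℝ[ε,ε^{−1}][x_1, …, x_n] such that every coefficient of f' is a polynomial in ε (that is, no negative powers of ε occur in the coefficients of f') and substituting ε = 0 into f' yields f. Then there exists a monotone single-(source,sink) ABP of the same format (1, w_1, …, w_{d−1}, 1) with affine linear labels over ℝ_{≥0} computing f. -/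
open scoped BigOperators

attribute [local instance] Classical.propDecidable

namespace MonABP

/-- Evaluation of a real Laurent polynomial at a real number `x`
(using integer powers of `x`). -/
noncomputable def evalAt (q : LaurentPolynomial ℝ) (x : ℝ) : ℝ :=
  q.coeff.sum fun z c => c * x ^ z

/-- A Laurent polynomial belongs to `ℝ[ε,ε⁻¹]₊` iff it is nonnegative for all
sufficiently small `ε > 0`. -/
def EventuallyNonneg (q : LaurentPolynomial ℝ) : Prop :=
  ∃ δ > (0 : ℝ), ∀ x : ℝ, 0 < x → x < δ → 0 ≤ evalAt q x

/-- The coefficient, at the monomial (exponent vector) `m`, of the polynomial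
computed by the single-(source,sink) ABP of format `w` over the commutative
semiring `R` whose edge labels are the affine linear forms with constant terms
`Cc k a b` and linear coefficients `Ll k a b t` (entry `(a,b)` of the `k`-th
matrix is `Cc k a b + Σ_t Ll k a b t · x_t`): it is obtained by expanding the
product of the label matrices, summing over all source-to-sink paths `v` and, for
each edge of the path, the choice `s k` of either the constant term (`none`) or a
variable (`some t`). -/
noncomputable def affCoeff (R : Type*) [CommSemiring R] (d n : ℕ) (w : Fin (d + 1) → ℕ)
    (Cc : ∀ k : Fin d, Fin (w k.castSucc) → Fin (w k.succ) → R)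
    (Ll : ∀ k : Fin d, Fin (w k.castSucc) → Fin (w k.succ) → Fin n → R)
    (m : Fin n →₀ ℕ) : R :=
  ∑ v : ∀ k : Fin (d + 1), Fin (w k),
    ∑ s : Fin d → Option (Fin n),
      if (∑ k : Fin d, Option.elim (s k) 0 fun t => Finsupp.single t 1) = m
      then ∏ k : Fin d,
        Option.elim (s k) (Cc k (v k.castSucc) (v k.succ))
          (fun t => Ll k (v k.castSucc) (v k.succ) t)
      else 0

end MonABP

/-!
Measure each nonzero label by its order, the least power of `ε` occurring in it. An eventually
nonnegative label has a positive lowest coefficient, so the lowest terms of the path products of a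
given monomial cannot cancel; as `f'` has no negative powers of `ε`, every path with nonzero labels
has nonnegative total order. Hence the shortest-path potential `φ` from the source, lowered to `0`
at the sink, satisfies `φ b ≤ φ a + order q` on every edge `a → b` with nonzero label `q`.
Multiplying each label by `ε ^ (φ a - φ b)` leaves every path product unchanged (the exponents
telescope to `φ source - φ sink = 0`) and puts all labels in `ℝ[ε]`; setting `ε = 0` then gives
nonnegative real labels whose path products are the `ε⁰`-coefficients of the original ones.
-/

theorem Fin.sum_succ_sub_castSucc {G : Type*} [AddCommGroup G] :
    ∀ {d : ℕ} (g : Fin (d + 1) → G),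
      ∑ k : Fin d, (g k.succ - g k.castSucc) = g (Fin.last d) - g 0
  | 0, _ => by simp
  | d + 1, g => by
    rw [Fin.sum_univ_castSucc]
    simp only [Fin.succ_castSucc]
    rw [Fin.sum_succ_sub_castSucc (fun k => g k.castSucc)]
    simp only [Fin.succ_last, Fin.castSucc_zero]
    abel

namespace MonABP

section LaurentCoeff

variable {R : Type*} [Semiring R]

lemma coeff_mul_of_vanish_below {p q : LaurentPolynomial R} {a b : ℤ}
    (hp : ∀ y < a, p.coeff y = 0) (hq : ∀ y < b, q.coeff y = 0) :
    (∀ z < a + b, (p * q).coeff z = 0) ∧ (p * q).coeff (a + b) = p.coeff a * q.coeff b := by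
  have ha : ∀ x ∈ p.coeff.support, a ≤ x := fun x hx =>
    not_lt.1 fun h => Finsupp.mem_support_iff.1 hx (hp x h)
  have hb : ∀ y ∈ q.coeff.support, b ≤ y := fun y hy =>
    not_lt.1 fun h => Finsupp.mem_support_iff.1 hy (hq y h)
  refine ⟨fun z hz => ?_, ?_⟩
  · rw [AddMonoidAlgebra.coeff_mul]
    refine Finset.sum_eq_zero fun x hx => Finset.sum_eq_zero fun y hy => if_neg ?_
    linarith [ha x hx, hb y hy]
  · rw [AddMonoidAlgebra.coeff_mul, Finsupp.sum, Finset.sum_eq_single a]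
    · rw [Finsupp.sum, Finset.sum_eq_single b, if_pos rfl]
      · intro y hy hyb
        exact if_neg fun h => hyb (by omega)
      · intro hb'
        rw [Finsupp.notMem_support_iff.1 hb', mul_zero, ite_self]
    · intro x hx hxa
      refine Finset.sum_eq_zero fun y hy => if_neg ?_
      have := lt_of_le_of_ne (ha x hx) (Ne.symm hxa)
      linarith [hb y hy]
    · intro ha'
      simp [Finsupp.notMem_support_iff.1 ha']

/-- The `ε`-adic valuation: the least exponent occurring in `q` (junk value `0` for `q = 0`). -/
noncomputable def order (q : LaurentPolynomial R) : ℤ :=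
  if h : q.coeff.support.Nonempty then q.coeff.support.min' h else 0

lemma coeff_eq_zero_of_lt_order {q : LaurentPolynomial R} {y : ℤ} (hy : y < order q) :
    q.coeff y = 0 := by
  by_contra hq
  have hs : q.coeff.support.Nonempty := ⟨y, Finsupp.mem_support_iff.2 hq⟩
  rw [order, dif_pos hs] at hy
  exact hy.not_ge (Finset.min'_le _ _ (Finsupp.mem_support_iff.2 hq))

lemma coeff_order_ne_zero {q : LaurentPolynomial R} (hq : q ≠ 0) : q.coeff (order q) ≠ 0 := by
  have hs : q.coeff.support.Nonempty :=
    Finsupp.support_nonempty_iff.2 (mt AddMonoidAlgebra.coeff_eq_zero.1 hq)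
  rw [order, dif_pos hs]
  exact Finsupp.mem_support_iff.1 (Finset.min'_mem _ hs)

end LaurentCoeff

lemma coeff_prod_of_vanish_below {R ι : Type*} [CommSemiring R] (s : Finset ι)
    (q : ι → LaurentPolynomial R) (e : ι → ℤ) (h : ∀ i ∈ s, ∀ y < e i, (q i).coeff y = 0) :
    (∀ z < ∑ i ∈ s, e i, (∏ i ∈ s, q i).coeff z = 0) ∧
      (∏ i ∈ s, q i).coeff (∑ i ∈ s, e i) = ∏ i ∈ s, (q i).coeff (e i) := by
  induction s using Finset.cons_induction with
  | empty =>
    simp only [Finset.prod_empty, Finset.sum_empty, AddMonoidAlgebra.one_def,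
      AddMonoidAlgebra.coeff_single, Finsupp.single_apply]
    exact ⟨fun z hz => if_neg hz.ne', rfl⟩
  | cons j s hj ih =>
    simp only [Finset.mem_cons, forall_eq_or_imp] at h
    obtain ⟨hlt, heq⟩ := ih h.2
    obtain ⟨hlt', heq'⟩ := coeff_mul_of_vanish_below h.1 hlt
    rw [Finset.prod_cons, Finset.sum_cons, Finset.prod_cons]
    exact ⟨hlt', by rw [heq', heq]⟩

section Positivity

/-- As `ε → 0⁺` the function `ε ↦ ε^(-z) q(ε)` tends to the coefficient of `ε^z`. -/
lemma coeff_nonneg_of_vanish_below {q : LaurentPolynomial ℝ} (hq : EventuallyNonneg q) {z : ℤ}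
    (hz : ∀ y < z, q.coeff y = 0) : 0 ≤ q.coeff z := by
  obtain ⟨δ, hδ, hnonneg⟩ := hq
  have hsupp : ∀ u ∈ q.coeff.support, z ≤ u := fun u hu =>
    not_lt.1 fun h => Finsupp.mem_support_iff.1 hu (hz u h)
  set g : ℝ → ℝ := fun x => ∑ u ∈ q.coeff.support, q.coeff u * x ^ (u - z).toNat with hg
  have hg0 : g 0 = q.coeff z := by
    simp only [hg]
    rw [Finset.sum_eq_single z]
    · simp
    · intro u hu huz
      have : (u - z).toNat ≠ 0 := by have := hsupp u hu; omega
      rw [zero_pow this, mul_zero]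
    · intro hz'
      rw [Finsupp.notMem_support_iff.1 hz', zero_mul]
  have hg_eq : ∀ x : ℝ, 0 < x → g x = evalAt q x * x ^ (-z) := by
    intro x hx
    simp only [hg]
    rw [evalAt, Finsupp.sum, Finset.sum_mul]
    refine Finset.sum_congr rfl fun u hu => ?_
    rw [← zpow_natCast, Int.toNat_of_nonneg (by linarith [hsupp u hu]), mul_assoc,
      ← zpow_add₀ hx.ne', sub_eq_add_neg]
  have hcont : Continuous g := by fun_prop
  rw [← hg0]
  refine ge_of_tendsto
    (hcont.continuousAt.tendsto.mono_left (nhdsWithin_le_nhds (s := Set.Ioi 0))) ?_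
  filter_upwards [Ioo_mem_nhdsGT hδ] with x hx
  rw [hg_eq x hx.1]
  exact mul_nonneg (hnonneg x hx.1 hx.2) (zpow_pos hx.1 _).le

lemma coeff_nonneg_of_le_order {q : LaurentPolynomial ℝ} (hq : EventuallyNonneg q) {z : ℤ}
    (hz : z ≤ order q) : 0 ≤ q.coeff z :=
  coeff_nonneg_of_vanish_below hq fun _ hy => coeff_eq_zero_of_lt_order (hy.trans_le hz)

lemma coeff_order_pos {q : LaurentPolynomial ℝ} (hq : EventuallyNonneg q) (hq0 : q ≠ 0) :
    0 < q.coeff (order q) :=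
  (coeff_nonneg_of_le_order hq le_rfl).lt_of_ne (coeff_order_ne_zero hq0).symm

/-- Lowest terms with positive coefficients cannot cancel in a sum, so a family whose sum has no
negative powers of `ε` has no negative lowest exponents either. -/
lemma nonneg_of_coeff_sum_eq_zero {ι : Type*} (s : Finset ι) (Q : ι → LaurentPolynomial ℝ)
    (e : ι → ℤ) (hvan : ∀ i ∈ s, ∀ y < e i, (Q i).coeff y = 0)
    (hpos : ∀ i ∈ s, Q i ≠ 0 → 0 < (Q i).coeff (e i))
    (hsum : ∀ z < 0, (∑ i ∈ s, Q i).coeff z = 0) {i : ι} (hi : i ∈ s) (hQi : Q i ≠ 0) :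
    0 ≤ e i := by
  by_contra! hneg
  obtain ⟨j, hj, hmin⟩ := (s.filter fun j => Q j ≠ 0).exists_min_image e
    ⟨i, Finset.mem_filter.2 ⟨hi, hQi⟩⟩
  obtain ⟨hjs, hQj⟩ := Finset.mem_filter.1 hj
  have hej : e j < 0 := (hmin i (Finset.mem_filter.2 ⟨hi, hQi⟩)).trans_lt hneg
  have hterm : ∀ k ∈ s, 0 ≤ (Q k).coeff (e j) := by
    intro k hk
    by_cases hQk : Q k = 0
    · simp [hQk]
    rcases (hmin k (Finset.mem_filter.2 ⟨hk, hQk⟩)).lt_or_eq with hlt | heq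
    · rw [hvan k hk _ hlt]
    · exact heq ▸ (hpos k hk hQk).le
  have : 0 < (∑ k ∈ s, Q k).coeff (e j) := by
    rw [AddMonoidAlgebra.coeff_sum, Finsupp.finsetSum_apply]
    exact Finset.sum_pos' hterm ⟨j, hjs, hpos j hjs hQj⟩
  exact this.ne' (hsum _ hej)

end Positivity

section Paths

variable {R : Type*} {n d : ℕ} {w : Fin (d + 1) → ℕ}

/-- The index `(v, s)` of a term of the sum defining `affCoeff`. -/
abbrev LabeledPath (n d : ℕ) (w : Fin (d + 1) → ℕ) :=
  (∀ k : Fin (d + 1), Fin (w k)) × (Fin d → Option (Fin n))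

def label (C : ∀ k : Fin d, Fin (w k.castSucc) → Fin (w k.succ) → R)
    (L : ∀ k : Fin d, Fin (w k.castSucc) → Fin (w k.succ) → Fin n → R)
    (k : Fin d) (a : Fin (w k.castSucc)) (b : Fin (w k.succ)) (o : Option (Fin n)) : R :=
  o.elim (C k a b) (L k a b)

lemma label_option_elim
    (F : ∀ k : Fin d, Fin (w k.castSucc) → Fin (w k.succ) → Option (Fin n) → R)
    (k : Fin d) (a : Fin (w k.castSucc)) (b : Fin (w k.succ)) (o : Option (Fin n)) :
    label (fun k a b => F k a b none) (fun k a b t => F k a b (some t)) k a b o = F k a b o := by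
  cases o <;> rfl

namespace LabeledPath

noncomputable def monomial (p : LabeledPath n d w) : Fin n →₀ ℕ :=
  ∑ k, (p.2 k).elim 0 fun t => Finsupp.single t 1

def edgeLabel (C : ∀ k : Fin d, Fin (w k.castSucc) → Fin (w k.succ) → R)
    (L : ∀ k : Fin d, Fin (w k.castSucc) → Fin (w k.succ) → Fin n → R)
    (p : LabeledPath n d w) (k : Fin d) : R :=
  label C L k (p.1 k.castSucc) (p.1 k.succ) (p.2 k)

end LabeledPath

lemma affCoeff_eq_sum_labeledPath [CommSemiring R]
    (C : ∀ k : Fin d, Fin (w k.castSucc) → Fin (w k.succ) → R)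
    (L : ∀ k : Fin d, Fin (w k.castSucc) → Fin (w k.succ) → Fin n → R) (m : Fin n →₀ ℕ) :
    affCoeff R d n w C L m =
      ∑ p : LabeledPath n d w, if p.monomial = m then ∏ k, p.edgeLabel C L k else 0 := by
  rw [affCoeff, ← Fintype.sum_prod_type']
  rfl

end Paths

section Potential

variable {R : Type*} [Semiring R] {n d : ℕ} {w : Fin (d + 1) → ℕ}
  (C : ∀ k : Fin d, Fin (w k.castSucc) → Fin (w k.succ) → LaurentPolynomial R)
  (L : ∀ k : Fin d, Fin (w k.castSucc) → Fin (w k.succ) → Fin n → LaurentPolynomial R)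

noncomputable def pathsTo (k : Fin (d + 1)) (a : Fin (w k)) : Finset (LabeledPath n d w) :=
  {p | p.1 k = a ∧ ∀ j : Fin d, j.castSucc < k → p.edgeLabel C L j ≠ 0}

noncomputable def prefixOrder (p : LabeledPath n d w) (k : Fin (d + 1)) : ℤ :=
  ∑ j with j.castSucc < k, order (p.edgeLabel C L j)

lemma prefixOrder_zero (p : LabeledPath n d w) : prefixOrder C L p 0 = 0 := by
  simp [prefixOrder]

lemma prefixOrder_last (p : LabeledPath n d w) :
    prefixOrder C L p (Fin.last d) = ∑ j, order (p.edgeLabel C L j) := by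
  simp [prefixOrder, Fin.castSucc_lt_last]

lemma exists_mem_pathsTo_succ {k : Fin d} {a : Fin (w k.castSucc)} {p : LabeledPath n d w}
    (hp : p ∈ pathsTo C L k.castSucc a) (b : Fin (w k.succ)) (o : Option (Fin n))
    (hne : label C L k a b o ≠ 0) :
    ∃ p' ∈ pathsTo C L k.succ b,
      prefixOrder C L p' k.succ = prefixOrder C L p k.castSucc + order (label C L k a b o) := by
  simp only [pathsTo, Finset.mem_filter, Finset.mem_univ, true_and] at hp ⊢
  let p' : LabeledPath n d w := (Function.update p.1 k.succ b, Function.update p.2 k o)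
  have hbefore : ∀ j < k, p'.edgeLabel C L j = p.edgeLabel C L j := by
    intro j hj
    have h1 : j.castSucc ≠ k.succ := (Fin.castSucc_lt_succ_iff.2 hj.le).ne
    have h2 : j.succ ≠ k.succ := (Fin.succ_lt_succ_iff.2 hj).ne
    simp [p', LabeledPath.edgeLabel, Function.update_of_ne h1, Function.update_of_ne h2,
      Function.update_of_ne hj.ne]
  have hat : p'.edgeLabel C L k = label C L k a b o := by
    have hk : k.castSucc ≠ k.succ := Fin.castSucc_lt_succ.ne
    simp [p', LabeledPath.edgeLabel, Function.update_of_ne hk, hp.1]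
  refine ⟨p', ⟨by simp [p'], fun j hj => ?_⟩, ?_⟩
  · rcases (Fin.castSucc_lt_succ_iff.1 hj).lt_or_eq with hjk | rfl
    · rw [hbefore j hjk]
      exact hp.2 j (Fin.castSucc_lt_castSucc_iff.2 hjk)
    · rwa [hat]
  · have hsplit : ({j | j.castSucc < k.succ} : Finset (Fin d)) =
        insert k ({j | j.castSucc < k.castSucc} : Finset (Fin d)) := by
      ext j
      simp [le_iff_lt_or_eq, or_comm]
    rw [prefixOrder, hsplit, Finset.sum_insert (by simp), hat, add_comm, prefixOrder]
    congr 1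
    refine Finset.sum_congr rfl fun j hj => ?_
    rw [hbefore j (by simpa using hj)]

end Potential

section Rescaling

variable {n d : ℕ} {w : Fin (d + 1) → ℕ}
  (C : ∀ k : Fin d, Fin (w k.castSucc) → Fin (w k.succ) → LaurentPolynomial ℝ)
  (L : ∀ k : Fin d, Fin (w k.castSucc) → Fin (w k.succ) → Fin n → LaurentPolynomial ℝ)

lemma sum_order_nonneg (hlab : ∀ k a b o, EventuallyNonneg (label C L k a b o))
    (hpoly : ∀ m : Fin n →₀ ℕ, ∀ z < 0, (affCoeff (LaurentPolynomial ℝ) d n w C L m).coeff z = 0)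
    (p : LabeledPath n d w) (hp : ∀ k, p.edgeLabel C L k ≠ 0) :
    0 ≤ ∑ k, order (p.edgeLabel C L k) := by
  have hvan : ∀ q : LabeledPath n d w, ∀ y < ∑ k, order (q.edgeLabel C L k),
      (∏ k, q.edgeLabel C L k).coeff y = 0 := fun q =>
    (coeff_prod_of_vanish_below _ _ _ fun _ _ _ => coeff_eq_zero_of_lt_order).1
  have hpos : ∀ q : LabeledPath n d w, (∀ k, q.edgeLabel C L k ≠ 0) →
      0 < (∏ k, q.edgeLabel C L k).coeff (∑ k, order (q.edgeLabel C L k)) := by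
    intro q hq
    rw [(coeff_prod_of_vanish_below _ _ _ fun _ _ _ => coeff_eq_zero_of_lt_order).2]
    exact Finset.prod_pos fun k _ => coeff_order_pos (hlab ..) (hq k)
  refine nonneg_of_coeff_sum_eq_zero {q | q.monomial = p.monomial}
    (fun q => ∏ k, q.edgeLabel C L k) _ (fun q _ => hvan q) (fun q _ hq => hpos q ?_)
    (fun z hz => ?_) (i := p) (by simp) fun h => (hpos p hp).ne' (by simp [h])
  · exact fun k hk => hq (Finset.prod_eq_zero (Finset.mem_univ k) hk)
  · rw [Finset.sum_filter, ← affCoeff_eq_sum_labeledPath]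
    exact hpoly _ z hz

/-- The shortest-path potential of a vertex, with lengths `order` of the nonzero labels. At the
sink it is lowered to `0`, which keeps it admissible by `sum_order_nonneg`. -/
noncomputable def potential (k : Fin (d + 1)) (a : Fin (w k)) : ℤ :=
  if k = Fin.last d then 0
  else if h : (pathsTo C L k a).Nonempty then (pathsTo C L k a).inf' h (prefixOrder C L · k)
  else 0

lemma potential_zero (a : Fin (w 0)) : potential C L 0 a = 0 := by
  simp [potential, prefixOrder_zero]

lemma potential_last (a : Fin (w (Fin.last d))) : potential C L (Fin.last d) a = 0 :=
  if_pos rfl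

lemma potential_succ_le (hlab : ∀ k a b o, EventuallyNonneg (label C L k a b o))
    (hpoly : ∀ m : Fin n →₀ ℕ, ∀ z < 0, (affCoeff (LaurentPolynomial ℝ) d n w C L m).coeff z = 0)
    {k : Fin d} {a : Fin (w k.castSucc)} (ha : (pathsTo C L k.castSucc a).Nonempty)
    {b : Fin (w k.succ)} {o : Option (Fin n)} (hne : label C L k a b o ≠ 0) :
    potential C L k.succ b ≤ potential C L k.castSucc a + order (label C L k a b o) := by
  obtain ⟨p, hp, hmin⟩ := Finset.exists_mem_eq_inf' ha (prefixOrder C L · k.castSucc)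
  obtain ⟨p', hp', hord⟩ := exists_mem_pathsTo_succ C L hp b o hne
  have hpa : potential C L k.castSucc a = prefixOrder C L p k.castSucc := by
    rw [← hmin]
    exact (if_neg (Fin.castSucc_ne_last k)).trans (dif_pos ha)
  rw [hpa, ← hord]
  by_cases hlast : k.succ = Fin.last d
  · rw [potential, if_pos hlast, hlast, prefixOrder_last]
    refine sum_order_nonneg C L hlab hpoly p' fun j => ?_
    simp only [pathsTo, Finset.mem_filter] at hp'
    exact hp'.2.2 j (hlast ▸ Fin.castSucc_lt_last j)
  · rw [potential, if_neg hlast, dif_pos ⟨p', hp'⟩]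
    exact Finset.inf'_le _ hp'

/-- The label `a → b` of layer `k`, multiplied by `ε` to the potential difference, evaluated at
`ε = 0`; labels leaving unreachable vertices are replaced by `0`. -/
noncomputable def rescaledLabel (k : Fin d) (a : Fin (w k.castSucc)) (b : Fin (w k.succ))
    (o : Option (Fin n)) : ℝ :=
  if (pathsTo C L k.castSucc a).Nonempty then
    (label C L k a b o).coeff (potential C L k.succ b - potential C L k.castSucc a)
  else 0

lemma rescaledLabel_nonneg (hlab : ∀ k a b o, EventuallyNonneg (label C L k a b o))
    (hpoly : ∀ m : Fin n →₀ ℕ, ∀ z < 0, (affCoeff (LaurentPolynomial ℝ) d n w C L m).coeff z = 0)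
    (k : Fin d) (a : Fin (w k.castSucc)) (b : Fin (w k.succ)) (o : Option (Fin n)) :
    0 ≤ rescaledLabel C L k a b o := by
  rw [rescaledLabel]
  split_ifs with ha
  · by_cases hne : label C L k a b o = 0
    · simp [hne]
    · exact coeff_nonneg_of_le_order (hlab ..)
        (sub_le_iff_le_add'.2 (potential_succ_le C L hlab hpoly ha hne))
  · exact le_rfl

lemma prod_rescaledLabel (hlab : ∀ k a b o, EventuallyNonneg (label C L k a b o))
    (hpoly : ∀ m : Fin n →₀ ℕ, ∀ z < 0, (affCoeff (LaurentPolynomial ℝ) d n w C L m).coeff z = 0)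
    (p : LabeledPath n d w) :
    ∏ k, rescaledLabel C L k (p.1 k.castSucc) (p.1 k.succ) (p.2 k) =
      (∏ k, p.edgeLabel C L k).coeff 0 := by
  by_cases hp : ∀ k, p.edgeLabel C L k ≠ 0
  · have hreach : ∀ k : Fin d, (pathsTo C L k.castSucc (p.1 k.castSucc)).Nonempty :=
      fun k => ⟨p, Finset.mem_filter.2 ⟨Finset.mem_univ _, rfl, fun j _ => hp j⟩⟩
    set e : Fin d → ℤ := fun k =>
      potential C L k.succ (p.1 k.succ) - potential C L k.castSucc (p.1 k.castSucc)
    have he : ∀ k, e k ≤ order (p.edgeLabel C L k) := fun k =>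
      sub_le_iff_le_add'.2 (potential_succ_le C L hlab hpoly (hreach k) (hp k))
    have hsum : ∑ k, e k = 0 := by
      rw [Fin.sum_succ_sub_castSucc (fun k => potential C L k (p.1 k)), potential_last,
        potential_zero, sub_zero]
    calc ∏ k, rescaledLabel C L k (p.1 k.castSucc) (p.1 k.succ) (p.2 k)
        = ∏ k, (p.edgeLabel C L k).coeff (e k) :=
          Finset.prod_congr rfl fun k _ => if_pos (hreach k)
      _ = (∏ k, p.edgeLabel C L k).coeff (∑ k, e k) :=
          ((coeff_prod_of_vanish_below _ _ _ fun k _ _ hy =>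
            coeff_eq_zero_of_lt_order (hy.trans_le (he k))).2).symm
      _ = (∏ k, p.edgeLabel C L k).coeff 0 := by rw [hsum]
  · obtain ⟨k, hk⟩ := not_forall_not.1 hp
    rw [Finset.prod_eq_zero (Finset.mem_univ k) hk, Finset.prod_eq_zero (Finset.mem_univ k)]
    · rfl
    · rw [LabeledPath.edgeLabel] at hk
      simp [rescaledLabel, hk]

lemma affCoeff_rescaledLabel (hlab : ∀ k a b o, EventuallyNonneg (label C L k a b o))
    (hpoly : ∀ m : Fin n →₀ ℕ, ∀ z < 0, (affCoeff (LaurentPolynomial ℝ) d n w C L m).coeff z = 0)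
    (m : Fin n →₀ ℕ) :
    affCoeff ℝ d n w (fun k a b => rescaledLabel C L k a b none)
        (fun k a b t => rescaledLabel C L k a b (some t)) m =
      (affCoeff (LaurentPolynomial ℝ) d n w C L m).coeff 0 := by
  rw [affCoeff_eq_sum_labeledPath, affCoeff_eq_sum_labeledPath, AddMonoidAlgebra.coeff_sum,
    Finsupp.finsetSum_apply]
  refine Finset.sum_congr rfl fun p _ => ?_
  split_ifs
  · simp only [LabeledPath.edgeLabel, label_option_elim]
    exact prod_rescaledLabel C L hlab hpoly p
  · rfl

end Rescaling

end MonABP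

theorem monotone_single_source_sink_closed_general (n d : ℕ) (w : Fin (d + 1) → ℕ)
    (f : MvPolynomial (Fin n) ℝ)
    (Cc : ∀ k : Fin d, Fin (w k.castSucc) → Fin (w k.succ) → LaurentPolynomial ℝ)
    (Ll : ∀ k : Fin d, Fin (w k.castSucc) → Fin (w k.succ) → Fin n → LaurentPolynomial ℝ)
    (hC : ∀ k a b, MonABP.EventuallyNonneg (Cc k a b))
    (hL : ∀ k a b t, MonABP.EventuallyNonneg (Ll k a b t))
    (hpoly : ∀ m : Fin n →₀ ℕ, ∀ z : ℤ, z < 0 →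
      (MonABP.affCoeff (LaurentPolynomial ℝ) d n w Cc Ll m).coeff z = 0)
    (hf : ∀ m : Fin n →₀ ℕ,
      f.coeff m = (MonABP.affCoeff (LaurentPolynomial ℝ) d n w Cc Ll m).coeff 0) :
    ∃ (Cc' : ∀ k : Fin d, Fin (w k.castSucc) → Fin (w k.succ) → ℝ)
      (Ll' : ∀ k : Fin d, Fin (w k.castSucc) → Fin (w k.succ) → Fin n → ℝ),
      (∀ k a b, 0 ≤ Cc' k a b) ∧ (∀ k a b t, 0 ≤ Ll' k a b t) ∧
      ∀ m : Fin n →₀ ℕ, f.coeff m = MonABP.affCoeff ℝ d n w Cc' Ll' m := by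
  have hlab : ∀ k a b o, MonABP.EventuallyNonneg (MonABP.label Cc Ll k a b o) := by
    rintro k a b (_ | t)
    exacts [hC k a b, hL k a b t]
  exact ⟨fun k a b => MonABP.rescaledLabel Cc Ll k a b none,
    fun k a b t => MonABP.rescaledLabel Cc Ll k a b (some t),
    fun k a b => MonABP.rescaledLabel_nonneg Cc Ll hlab hpoly k a b none,
    fun k a b t => MonABP.rescaledLabel_nonneg Cc Ll hlab hpoly k a b (some t),
    fun m => (hf m).trans (MonABP.affCoeff_rescaledLabel Cc Ll hlab hpoly m).symm⟩

/-- If a single-(source,sink) ABP of format `(1, w 1, …, w (d-1), 1)`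
with affine linear labels over `ℝ[ε,ε⁻¹]₊` computes a polynomial `f'` none of whose
coefficients contains a negative power of `ε`, and substituting `ε = 0` in `f'`
yields `f`, then `f` is computed by a monotone single-(source,sink) ABP of the same
format with affine linear labels over `ℝ≥0`. -/
theorem monotone_single_source_sink_closed (n d : ℕ) (w : Fin (d + 1) → ℕ)
    (h0 : w 0 = 1) (hlast : w (Fin.last d) = 1)
    (f : MvPolynomial (Fin n) ℝ)
    (Cc : ∀ k : Fin d, Fin (w k.castSucc) → Fin (w k.succ) → LaurentPolynomial ℝ)
    (Ll : ∀ k : Fin d, Fin (w k.castSucc) → Fin (w k.succ) → Fin n → LaurentPolynomial ℝ)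
    (hC : ∀ k a b, MonABP.EventuallyNonneg (Cc k a b))
    (hL : ∀ k a b t, MonABP.EventuallyNonneg (Ll k a b t))
    (hpoly : ∀ m : Fin n →₀ ℕ, ∀ z : ℤ, z < 0 →
      (MonABP.affCoeff (LaurentPolynomial ℝ) d n w Cc Ll m).coeff z = 0)
    (hf : ∀ m : Fin n →₀ ℕ,
      f.coeff m = (MonABP.affCoeff (LaurentPolynomial ℝ) d n w Cc Ll m).coeff 0) :
    ∃ (Cc' : ∀ k : Fin d, Fin (w k.castSucc) → Fin (w k.succ) → ℝ)
      (Ll' : ∀ k : Fin d, Fin (w k.castSucc) → Fin (w k.succ) → Fin n → ℝ),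
      (∀ k a b, 0 ≤ Cc' k a b) ∧ (∀ k a b t, 0 ≤ Ll' k a b t) ∧
      ∀ m : Fin n →₀ ℕ, f.coeff m = MonABP.affCoeff ℝ d n w Cc' Ll' m :=
  monotone_single_source_sink_closed_general n d w f Cc Ll hC hL hpoly hf
end

section
/- The tensor f_0 is not computed by any format-w trace ABP: there do not exist matrices g_i : E^i → E^i → ℂ (i ∈ Fin d) such that (g_0 ⊗ ⋯ ⊗ g_{d−1}) f_com = f_0. -/
open scoped BigOperators

attribute [local instance] Classical.propDecidable

namespace ABP

variable {d : ℕ} [NeZero d]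

/-- The set of edges in layer `i` of a (cyclic / trace) ABP of width format `w`:
an edge `(a, b)` goes from vertex `a` of layer `i` to vertex `b` of layer `i + 1`
(layer indices modulo `d`). -/
abbrev Edge (w : Fin d → ℕ) (i : Fin d) : Type := Fin (w i) × Fin (w (i + 1))

/-- An edge tuple is a valid path if consecutive edges match (cyclically). -/
def ValidPath (w : Fin d → ℕ) (p : ∀ i : Fin d, Edge w i) : Prop :=
  ∀ i : Fin d, (p i).2 = (p (i + 1)).1

/-- An edge is parity preserving if its two endpoints have the same parity. -/
def ParityPres {w : Fin d → ℕ} {i : Fin d} (e : Edge w i) : Prop :=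
  e.1.val % 2 = e.2.val % 2

/-- The number of parity-preserving edges of an edge tuple. -/
noncomputable def ppCount (w : Fin d → ℕ) (p : ∀ i : Fin d, Edge w i) : ℕ :=
  (Finset.univ.filter fun i : Fin d => ParityPres (p i)).card

/-- The tensor `f_com`: value 1 on valid paths, 0 elsewhere. -/
noncomputable def fcom (w : Fin d → ℕ) : (∀ i : Fin d, Edge w i) → ℂ :=
  fun p => if ValidPath w p then 1 else 0

/-- The tensor `f_0`: value 1 on valid paths containing exactly one
parity-preserving edge, 0 elsewhere. -/
noncomputable def f0 (w : Fin d → ℕ) : (∀ i : Fin d, Edge w i) → ℂ :=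
  fun p => if ValidPath w p ∧ ppCount w p = 1 then 1 else 0

/-- The action of a tuple of matrices `g i : E^i → E^i → ℂ` on a tensor:
`((⊗ᵢ gᵢ) f)(p) = Σ_q (Πᵢ gᵢ (p i) (q i)) · f q`. -/
noncomputable def actT (w : Fin d → ℕ) (g : ∀ i : Fin d, Edge w i → Edge w i → ℂ)
    (f : (∀ i : Fin d, Edge w i) → ℂ) : (∀ i : Fin d, Edge w i) → ℂ :=
  fun p => ∑ q : ∀ i : Fin d, Edge w i, (∏ i : Fin d, g i (p i) (q i)) * f q

end ABP

/-!
Write `M_i(e)` for the `w i × w (i + 1)` matrix `(a, b) ↦ g i e (a, b)`, so that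
`((⊗ g_i) f_com)(p) = tr (M_0(p_0) ⋯ M_{d-1}(p_{d-1}))`, and suppose this is `f_0`.

Since `d` is odd, every edge lies on a valid path with exactly one parity-preserving edge (let the
parities alternate everywhere else); testing `f_0` on such paths shows that every `g_i` is
invertible. Undoing all layers but `0` and `1` then gives `M_0(e) M_1(e') = 0` whenever `f_0`
vanishes on all edge tuples starting with `e, e'`: for every mismatched pair, and for the two
parity-preserving edges `(0, 0), (0, 0)`. But the relations for mismatched pairs, together with the
invertibility of `g_0` and `g_1`, force `M_0(x, z) M_1(z, y) ≠ 0` for all `x, y, z`.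
-/

theorem Fintype.sum_ite_forall_ne_eq_sum_update {ι M : Type*} [DecidableEq ι] [Fintype ι]
    {β : ι → Type*} [∀ i, Fintype (β i)] [∀ i, DecidableEq (β i)] [AddCommMonoid M]
    (k : ι) (v : ∀ i, β i) (F : (∀ i, β i) → M) :
    (∑ x, if ∀ i ≠ k, x i = v i then F x else 0) = ∑ b, F (Function.update v k b) := by
  have himage : Finset.univ.filter (fun x : ∀ i, β i => ∀ i ≠ k, x i = v i)
      = Finset.univ.image (Function.update v k) := by
    ext x
    simp only [Finset.mem_filter, Finset.mem_univ, true_and, Finset.mem_image,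
      Function.update_eq_iff]
    exact ⟨fun h => ⟨x k, rfl, fun i hi => (h i hi).symm⟩,
      fun ⟨_, _, h⟩ i hi => (h i hi).symm⟩
  rw [← Finset.sum_filter, himage, Finset.sum_image fun _ _ _ _ h =>
    Function.update_injective v k h]

namespace Matrix

def reshapeRow {ι X Z α : Type*} (A : Matrix ι (X × Z) α) (e : ι) : Matrix X Z α :=
  of (Function.curry (A e))

variable {K X Y Z : Type*} [Field K] [Fintype X] [Fintype Y] [Fintype Z]
  [DecidableEq X] [DecidableEq Y] [DecidableEq Z]

theorem reshapeRow_ne_zero {A : Matrix (X × Z) (X × Z) K} (hA : IsUnit A) (e : X × Z) :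
    reshapeRow A e ≠ 0 := by
  intro h
  refine (isUnit_iff_isUnit_det A).mp hA |>.ne_zero (det_eq_zero_of_row_eq_zero e ?_)
  exact fun ⟨u, m⟩ => congrFun₂ h u m

theorem eq_zero_of_reshapeRow_mulVec_eq_zero [Nonempty X] {A : Matrix (X × Z) (X × Z) K}
    (hA : IsUnit A) {ξ : Z → K} (h : ∀ e, reshapeRow A e *ᵥ ξ = 0) : ξ = 0 := by
  have hlift : A *ᵥ (fun um => ξ um.2) = 0 := by
    funext e
    simp only [mulVec, dotProduct, Fintype.sum_prod_type, Pi.zero_apply]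
    exact Finset.sum_eq_zero fun u _ => congrFun (h e) u
  have hzero := mulVec_injective_iff_isUnit.mpr hA (hlift.trans (mulVec_zero A).symm)
  funext m
  exact congrFun hzero (Classical.arbitrary X, m)

/- The columns `U z` of the slices `reshapeRow B (z, y)` are separated by the slices
`reshapeRow A (x, z)`, so they form a basis; a slice of `A` killing the matching column would
kill all of them. -/
theorem reshapeRow_mul_reshapeRow_ne_zero {A : Matrix (X × Z) (X × Z) K}
    {B : Matrix (Z × Y) (Z × Y) K} (hA : IsUnit A) (hB : IsUnit B)
    (hoff : ∀ x y {z z'}, z ≠ z' → reshapeRow A (x, z) * reshapeRow B (z', y) = 0)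
    (x : X) (y : Y) (z : Z) : reshapeRow A (x, z) * reshapeRow B (z, y) ≠ 0 := by
  have : Nonempty X := ⟨x⟩
  intro hdiag
  have hcol : ∀ z', ∃ ξ, reshapeRow B (z', y) *ᵥ ξ ≠ 0 := by
    intro z'
    by_contra! h
    exact reshapeRow_ne_zero hB (z', y) (toLin'.injective (LinearMap.ext fun ξ => by simp [h ξ]))
  choose ξ hξ using hcol
  set U : Z → Z → K := fun z' => reshapeRow B (z', y) *ᵥ ξ z'
  have hkill : ∀ x' {z₁ z₂}, z₁ ≠ z₂ → reshapeRow A (x', z₁) *ᵥ U z₂ = 0 := by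
    intro x' _ _ h
    simp [U, mulVec_mulVec, hoff x' y h]
  have hsep : ∀ z', ∃ x', reshapeRow A (x', z') *ᵥ U z' ≠ 0 := by
    intro z'
    by_contra! h
    refine hξ z' (eq_zero_of_reshapeRow_mulVec_eq_zero hA fun ⟨x', z''⟩ => ?_)
    rcases eq_or_ne z'' z' with rfl | hne
    · exact h x'
    · exact hkill x' hne
  have hU : LinearIndependent K U := by
    refine Fintype.linearIndependent_iff.mpr fun c hc z' => ?_
    obtain ⟨x', hx'⟩ := hsep z'
    have := congrArg (reshapeRow A (x', z') *ᵥ ·) hc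
    simp only [mulVec_sum, mulVec_smul, mulVec_zero] at this
    rw [Finset.sum_eq_single z' (fun z'' _ hne => by rw [hkill x' (Ne.symm hne), smul_zero])
      (by simp)] at this
    exact (smul_eq_zero.mp this).resolve_right hx'
  have hspan := hU.span_eq_top_of_card_eq_finrank' (Module.finrank_fintype_fun_eq_card K).symm
  refine reshapeRow_ne_zero hA (x, z) (toLin'.injective (LinearMap.ext_on_range hspan fun z' => ?_))
  rcases eq_or_ne z' z with rfl | hne
  · simp [U, mulVec_mulVec, hdiag]
  · simpa using hkill x (Ne.symm hne)

end Matrix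

namespace ABP

open Finset Function Matrix

variable {d : ℕ} [NeZero d] {w : Fin d → ℕ}

theorem add_one_ne_self (hd : 1 < d) (j : Fin d) : j + 1 ≠ j := by
  intro h
  have := Fin.one_eq_zero_iff.mp (add_eq_left.mp h)
  omega

theorem add_one_add_one_ne_self (hd : 2 < d) (j : Fin d) : j + 1 + 1 ≠ j := by
  intro h
  have h2 := congrArg Fin.val (add_eq_left.mp ((add_assoc j 1 1).symm.trans h))
  rw [Fin.val_add, Fin.val_one', Nat.mod_eq_of_lt (by omega : 1 < d),
    Nat.mod_eq_of_lt (by omega : 1 + 1 < d)] at h2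
  simp at h2

def pathOf (w : Fin d → ℕ) (v : ∀ i, Fin (w i)) : ∀ i : Fin d, Edge w i :=
  fun i => (v i, v (i + 1))

theorem pathOf_injective : Injective (pathOf w) :=
  fun _ _ h => funext fun i => congrArg Prod.fst (congrFun h i)

theorem validPath_iff_exists_pathOf (p : ∀ i : Fin d, Edge w i) :
    ValidPath w p ↔ ∃ v, pathOf w v = p :=
  ⟨fun hp => ⟨fun i => (p i).1, funext fun i => Prod.ext rfl (hp i).symm⟩,
    fun ⟨_, hv⟩ => hv ▸ fun _ => rfl⟩

theorem actT_fcom_apply (g : ∀ i : Fin d, Edge w i → Edge w i → ℂ)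
    (p : ∀ i : Fin d, Edge w i) :
    actT w g (fcom w) p = ∑ v : ∀ i, Fin (w i), ∏ i, g i (p i) (pathOf w v i) := by
  have himage : univ.filter (ValidPath w) = univ.image (pathOf w) := by
    ext q
    simp [validPath_iff_exists_pathOf]
  simp only [actT, fcom, mul_ite, mul_one, mul_zero]
  rw [← sum_filter, himage, sum_image fun _ _ _ _ h => pathOf_injective h]

theorem actT_actT (g' g : ∀ i : Fin d, Edge w i → Edge w i → ℂ)
    (f : (∀ i : Fin d, Edge w i) → ℂ) :
    actT w g' (actT w g f) = actT w (fun i a b => ∑ c, g' i a c * g i c b) f := by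
  funext p
  simp only [actT, Fintype.prod_sum, mul_sum, sum_mul]
  rw [sum_comm]
  refine sum_congr rfl fun r _ => sum_congr rfl fun q _ => ?_
  rw [prod_mul_distrib, mul_assoc]

theorem sum_mul_actT_update_eq_zero (g : ∀ i : Fin d, Edge w i → Edge w i → ℂ)
    (h : (∀ i : Fin d, Edge w i) → ℂ) (j : Fin d) (c : Edge w j → ℂ)
    (hc : c ᵥ* of (g j) = 0) (p : ∀ i : Fin d, Edge w i) :
    ∑ e, c e * actT w g h (update p j e) = 0 := by
  have hsplit : ∀ e (q : ∀ i : Fin d, Edge w i), ∏ i, g i (update p j e i) (q i)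
      = g j e (q j) * ∏ i ∈ univ.erase j, g i (p i) (q i) := by
    intro e q
    rw [← mul_prod_erase univ _ (mem_univ j), update_self]
    congr 1
    exact prod_congr rfl fun i hi => by rw [update_of_ne (ne_of_mem_erase hi)]
  simp only [actT, hsplit, mul_sum]
  rw [sum_comm]
  refine sum_eq_zero fun q _ => ?_
  have hq : ∑ e, c e * g j e (q j) = 0 := congrFun hc (q j)
  simp only [← mul_assoc, ← sum_mul, hq, zero_mul]

/- The offset `i - r` runs through `0, …, d - 1` along the cycle, and `d - 1` is even. -/
theorem parityPres_pathOf_iff (hodd : Odd d) (v : ∀ i, Fin (w i)) (r : Fin d) (ε : ℕ)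
    (hv : ∀ i, (v i : ℕ) % 2 = ((i - r : Fin d) + ε : ℕ) % 2) (i : Fin d) :
    ParityPres (pathOf w v i) ↔ i + 1 = r := by
  have hstep : ((i + 1 - r : Fin d) : ℕ) = ((i - r : Fin d) + 1 : ℕ) % d := by
    rw [add_sub_right_comm, Fin.val_add, Fin.val_one', Nat.add_mod_mod]
  have hlt := (i - r).isLt
  obtain ⟨k, hk⟩ := hodd
  rw [← sub_eq_zero, ← Fin.val_inj, Fin.val_zero, hstep]
  simp only [ParityPres, pathOf, hv, hstep]
  rcases Nat.lt_or_ge ((i - r : Fin d) + 1 : ℕ) d with h | h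
  · rw [Nat.mod_eq_of_lt h]
    omega
  · rw [show ((i - r : Fin d) + 1 : ℕ) = d by omega, Nat.mod_self]
    omega

theorem ppCount_pathOf_eq_one (hodd : Odd d) (v : ∀ i, Fin (w i)) (r : Fin d) (ε : ℕ)
    (hv : ∀ i, (v i : ℕ) % 2 = ((i - r : Fin d) + ε : ℕ) % 2) :
    ppCount w (pathOf w v) = 1 := by
  rw [ppCount, card_eq_one]
  refine ⟨r - 1, ?_⟩
  ext i
  simp [parityPres_pathOf_iff hodd v r ε hv, eq_sub_iff_add_eq]

theorem exists_pathOf_ppCount_eq_one (hd : 1 < d) (hodd : Odd d) (hw : ∀ i, 2 ≤ w i)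
    (j : Fin d) (a : Fin (w j)) (b : Fin (w (j + 1))) :
    ∃ v : ∀ i, Fin (w i), v j = a ∧ v (j + 1) = b ∧ ppCount w (pathOf w v) = 1 := by
  -- The parity pattern is anchored at `j + 1` (defect on edge `j`) if `a` and `b` have the
  -- same parity, and at `j` (defect on edge `j - 1`) otherwise.
  set r : Fin d := if (a : ℕ) % 2 = (b : ℕ) % 2 then j + 1 else j
  let base : ∀ i, Fin (w i) := fun i =>
    ⟨((i - r : Fin d) + (a : ℕ) % 2 : ℕ) % 2, by have := hw i; omega⟩
  have hj := add_one_ne_self hd j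
  refine ⟨update (update base j a) (j + 1) b, by simp [update_of_ne hj.symm], by simp,
    ppCount_pathOf_eq_one hodd _ r ((a : ℕ) % 2) fun i => ?_⟩
  have hone : ((j + 1 - j : Fin d) : ℕ) = 1 := by
    rw [add_sub_cancel_left, Fin.val_one', Nat.mod_eq_of_lt hd]
  have hneg : ((j - (j + 1) : Fin d) : ℕ) = d - 1 := by
    rw [sub_add_cancel_left, Fin.val_neg, if_neg fun h => by
      have := Fin.one_eq_zero_iff.mp h; omega, Fin.val_one', Nat.mod_eq_of_lt hd]
  obtain ⟨k, hk⟩ := hodd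
  by_cases hi1 : i = j + 1
  · subst hi1
    simp only [update_self, r]
    split_ifs
    · rw [sub_self, Fin.val_zero]; omega
    · rw [hone]; omega
  by_cases hi0 : i = j
  · subst hi0
    simp only [update_of_ne hj.symm, update_self, r]
    split_ifs
    · rw [hneg]; omega
    · rw [sub_self, Fin.val_zero]; omega
  · simp [update_of_ne hi1, update_of_ne hi0, base]

theorem eq_pathOf_of_validPath_update (hd : 1 < d) {v : ∀ i, Fin (w i)} {j : Fin d}
    {e : Edge w j} (he : ValidPath w (update (pathOf w v) j e)) : e = pathOf w v j := by
  obtain ⟨i, rfl⟩ : ∃ i, j = i + 1 := ⟨j - 1, (sub_add_cancel j 1).symm⟩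
  have hi := add_one_ne_self hd i
  have hin := he i
  have hout := he (i + 1)
  rw [update_of_ne hi.symm, update_self] at hin
  rw [update_self, update_of_ne (add_one_ne_self hd (i + 1))] at hout
  exact Prod.ext hin.symm hout

theorem f0_update_pathOf (hd : 1 < d) {v : ∀ i, Fin (w i)} (hv : ppCount w (pathOf w v) = 1)
    (j : Fin d) (e : Edge w j) :
    f0 w (update (pathOf w v) j e) = if e = pathOf w v j then 1 else 0 := by
  split_ifs with he
  · rw [he, update_eq_self]
    exact if_pos ⟨fun _ => rfl, hv⟩
  · exact if_neg fun h => he (eq_pathOf_of_validPath_update hd h.1)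

theorem isUnit_of_actT_fcom_eq_f0 (hd : 1 < d) (hodd : Odd d) (hw : ∀ i, 2 ≤ w i)
    {g : ∀ i : Fin d, Edge w i → Edge w i → ℂ} (H : actT w g (fcom w) = f0 w) (j : Fin d) :
    IsUnit (of (g j)) := by
  suffices h : ∀ c, c ᵥ* of (g j) = 0 → c = 0 by
    refine vecMul_injective_iff_isUnit.mp fun c c' hcc' => sub_eq_zero.mp (h _ ?_)
    rw [sub_vecMul]
    exact sub_eq_zero.mpr hcc'
  intro c hc
  funext e
  obtain ⟨v, hva, hvb, hv⟩ := exists_pathOf_ppCount_eq_one hd hodd hw j e.1 e.2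
  have hve : pathOf w v j = e := by rw [pathOf, hva, hvb]
  calc c e = ∑ e', c e' * f0 w (update (pathOf w v) j e') := by
        simp [f0_update_pathOf hd hv, hve]
    _ = 0 := H ▸ sum_mul_actT_update_eq_zero g (fcom w) j c hc (pathOf w v)

theorem f0_eq_zero_of_snd_ne_fst {q : ∀ i : Fin d, Edge w i} {j : Fin d}
    (h : (q j).2 ≠ (q (j + 1)).1) : f0 w q = 0 :=
  if_neg fun hq => h (hq.1 j)

theorem f0_eq_zero_of_parityPres {q : ∀ i : Fin d, Edge w i} {j : Fin d} (hj : j + 1 ≠ j)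
    (h₀ : ParityPres (q j)) (h₁ : ParityPres (q (j + 1))) : f0 w q = 0 := by
  refine if_neg fun ⟨_, hq⟩ => ?_
  have hsub : ({j, j + 1} : Finset (Fin d)) ⊆ univ.filter fun i => ParityPres (q i) := by
    intro i hi
    rcases mem_insert.mp hi with rfl | hi
    · simpa using h₀
    · rw [mem_singleton.mp hi]
      simpa using h₁
  have := card_le_card hsub
  rw [card_pair hj.symm] at this
  rw [ppCount] at hq
  omega

def idOutsidePair (g : ∀ i : Fin d, Edge w i → Edge w i → ℂ) (j : Fin d) :
    ∀ i : Fin d, Edge w i → Edge w i → ℂ :=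
  fun i => if i = j ∨ i = j + 1 then g i else fun a b => if a = b then 1 else 0

theorem pathOf_eq_outside_iff (hd : 2 < d) {j : Fin d} {v v' : ∀ i, Fin (w i)} :
    (∀ i ∈ (univ.erase j).erase (j + 1), pathOf w v i = pathOf w v' i) ↔
      ∀ i ≠ j + 1, v i = v' i := by
  have hpred₁ := add_one_ne_self (by omega) (j - 1)
  have hpred₂ := add_one_add_one_ne_self hd (j - 1)
  rw [sub_add_cancel] at hpred₁ hpred₂
  simp only [mem_erase, mem_univ, and_true, pathOf, Prod.mk.injEq]
  constructor
  · intro h i hi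
    by_cases hij : i = j
    · subst hij
      have := (h (i - 1) ⟨hpred₂.symm, hpred₁.symm⟩).2
      rwa [sub_add_cancel] at this
    · exact (h i ⟨hi, hij⟩).1
  · exact fun h i ⟨hi1, hi0⟩ => ⟨h i hi1, h _ fun h' => hi0 (add_right_cancel h')⟩

theorem actT_idOutsidePair_fcom_apply (hd : 2 < d)
    (g : ∀ i : Fin d, Edge w i → Edge w i → ℂ) (j : Fin d) (e₀ : Edge w j)
    (e₁ : Edge w (j + 1)) (v : ∀ i, Fin (w i)) :
    actT w (idOutsidePair g j) (fcom w) (update (update (pathOf w v) j e₀) (j + 1) e₁)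
      = ∑ m, g j e₀ (v j, m) * g (j + 1) e₁ (m, v (j + 1 + 1)) := by
  have h01 := add_one_ne_self (by omega) j
  have h12 := add_one_ne_self (by omega) (j + 1)
  let F : (∀ i, Fin (w i)) → ℂ := fun v' =>
    g j e₀ (v' j, v' (j + 1)) * g (j + 1) e₁ (v' (j + 1), v' (j + 1 + 1))
  have hF : ∀ m, g j e₀ (v j, m) * g (j + 1) e₁ (m, v (j + 1 + 1)) = F (update v (j + 1) m) :=
    fun m => by simp [F, update_of_ne h01.symm, update_of_ne h12]
  rw [actT_fcom_apply, sum_congr rfl fun m _ => hF m,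
    ← Fintype.sum_ite_forall_ne_eq_sum_update (j + 1) v F]
  refine sum_congr rfl fun v' _ => ?_
  rw [← mul_prod_erase univ _ (mem_univ j),
    ← mul_prod_erase _ _ (mem_erase.mpr ⟨h01, mem_univ _⟩)]
  have hfactor : ∀ i ∈ (univ.erase j).erase (j + 1),
      idOutsidePair g j i (update (update (pathOf w v) j e₀) (j + 1) e₁ i) (pathOf w v' i)
      = if pathOf w v i = pathOf w v' i then 1 else 0 := fun i hi => by
    simp only [mem_erase, mem_univ, and_true] at hi
    rw [idOutsidePair, if_neg (by tauto), update_of_ne hi.1, update_of_ne hi.2]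
  rw [prod_congr rfl hfactor, prod_boole, idOutsidePair, idOutsidePair, if_pos (Or.inl rfl),
    if_pos (Or.inr rfl), update_self, update_of_ne h01.symm, update_self]
  split_ifs with hS hv' hv'
  · simp [F, pathOf, hv' j h01.symm, hv' _ h12]
  · exact absurd (fun i hi => ((pathOf_eq_outside_iff hd).mp hS i hi).symm) hv'
  · exact absurd ((pathOf_eq_outside_iff hd).mpr fun i hi => (hv' i hi).symm) hS
  · simp

/- Undo every layer except `j` and `j + 1`: applying `g i⁻¹` there turns `f` into the tensor
computed by the two matrices `g j`, `g (j + 1)` alone, whose entries are the products of their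
slices. -/
theorem reshapeRow_mul_reshapeRow_eq_zero (hd : 2 < d) (hw : ∀ i, 0 < w i)
    {g : ∀ i : Fin d, Edge w i → Edge w i → ℂ} (hg : ∀ i, IsUnit (of (g i)))
    {f : (∀ i : Fin d, Edge w i) → ℂ} (H : actT w g (fcom w) = f) {j : Fin d}
    {e₀ : Edge w j} {e₁ : Edge w (j + 1)}
    (hf : ∀ q, q j = e₀ → q (j + 1) = e₁ → f q = 0) :
    reshapeRow (of (g j)) e₀ * reshapeRow (of (g (j + 1))) e₁ = 0 := by
  ext u t
  have h01 := add_one_ne_self (by omega) j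
  let v : ∀ i, Fin (w i) := update (update (fun i => ⟨0, hw i⟩) j u) (j + 1 + 1) t
  let g' : ∀ i : Fin d, Edge w i → Edge w i → ℂ := fun i =>
    if i = j ∨ i = j + 1 then fun a b => if a = b then 1 else 0
    else fun a b => (of (g i))⁻¹ a b
  let p := update (update (pathOf w v) j e₀) (j + 1) e₁
  have hcomp : actT w g' f = actT w (idOutsidePair g j) (fcom w) := by
    rw [← H, actT_actT]
    congr 1
    funext i a b
    simp only [g', idOutsidePair]
    split_ifs
    · simp
    · have := congrFun₂ (nonsing_inv_mul _ ((isUnit_iff_isUnit_det _).mp (hg i))) a b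
      simpa [mul_apply, one_apply] using this
  have hvanish : actT w g' f p = 0 := by
    refine sum_eq_zero fun q _ => ?_
    by_cases h₀ : q j = e₀
    · by_cases h₁ : q (j + 1) = e₁
      · rw [hf q h₀ h₁, mul_zero]
      · rw [prod_eq_zero (mem_univ (j + 1)) (by simp [g', p, Ne.symm h₁]), zero_mul]
    · rw [prod_eq_zero (mem_univ j) (by simp [g', p, update_of_ne h01.symm, Ne.symm h₀]),
        zero_mul]
  calc (reshapeRow (of (g j)) e₀ * reshapeRow (of (g (j + 1))) e₁) u t
      = ∑ m, g j e₀ (v j, m) * g (j + 1) e₁ (m, v (j + 1 + 1)) := by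
        simp [mul_apply, reshapeRow, v, update_of_ne (add_one_add_one_ne_self hd j).symm]
    _ = actT w g' f p := by rw [hcomp, actT_idOutsidePair_fcom_apply hd]
    _ = 0 := hvanish

end ABP

/-- For odd `d ≥ 3` and width format `w` with all `w i ≥ 2`,
the tensor `f_0` is not computed by any format-`w` trace ABP: there is no tuple of
matrices `g` with `(g_0 ⊗ ⋯ ⊗ g_{d-1}) f_com = f_0`. -/
theorem f0_not_computed_by_format_w_trace_ABP (d : ℕ) [NeZero d] (hd3 : 3 ≤ d) (hodd : Odd d)
    (w : Fin d → ℕ) (hw : ∀ i, 2 ≤ w i) :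
    ¬ ∃ g : ∀ i : Fin d, ABP.Edge w i → ABP.Edge w i → ℂ,
        ABP.actT w g (ABP.fcom w) = ABP.f0 w := by
  rintro ⟨g, H⟩
  have hunit := ABP.isUnit_of_actT_fcom_eq_f0 (by omega) hodd hw H
  have hpos : ∀ i, 0 < w i := fun i => by have := hw i; omega
  let o : ∀ i, Fin (w i) := fun i => ⟨0, hpos i⟩
  refine Matrix.reshapeRow_mul_reshapeRow_ne_zero (hunit 0) (hunit (0 + 1))
    (fun x y z z' hz => ?_) (o 0) (o (0 + 1 + 1)) (o (0 + 1)) ?_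
  · exact ABP.reshapeRow_mul_reshapeRow_eq_zero hd3 hpos hunit H fun q h₀ h₁ =>
      ABP.f0_eq_zero_of_snd_ne_fst (j := 0) (by rw [h₀, h₁]; exact hz)
  · exact ABP.reshapeRow_mul_reshapeRow_eq_zero hd3 hpos hunit H fun q h₀ h₁ =>
      ABP.f0_eq_zero_of_parityPres (ABP.add_one_ne_self (by omega) 0)
        (by rw [h₀]; rfl) (by rw [h₁]; rfl)
end

section
/- The tensor f_0 lies in the closure, in the standard topology of the finite-dimensional complex vector space (Π i : Fin d, E^i) → ℂ, of the set {(g_0 ⊗ ⋯ ⊗ g_{d−1}) f_com : g_i : E^i → E^i → ℂ} of tensors computed by format-w trace ABPs. Concretely, for each ε ≠ 0 the tensor f_ε defined by f_ε(p) := ε^{k−1} if p is a valid path containing exactly k parity-preserving edges and f_ε(p) := 0 otherwise, is computed by a format-w trace ABP, and f_ε → f_0 as ε → 0. -/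
open scoped BigOperators

attribute [local instance] Classical.propDecidable

namespace ABP

/-- The tensor `f_ε`: value `ε^(k-1)` on valid paths containing exactly `k`
parity-preserving edges, 0 elsewhere. -/
noncomputable def feps {d : ℕ} [NeZero d] (w : Fin d → ℕ) (ε : ℂ) :
    (∀ i : Fin d, Edge w i) → ℂ :=
  fun p => if ValidPath w p then ε ^ (ppCount w p - 1) else 0

end ABP

/-!
Scaling every parity-preserving edge by `ε` and one layer by `ε⁻¹` is an action by diagonal
matrices, and it turns `f_com` into `f_ε`. Going once around the cycle, the vertex parity changes
an even number of times, so when `d` is odd every valid path has a parity-preserving edge; hence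
`f_ε` is a polynomial in `ε` whose value at `ε = 0` is `f_0`.
-/

namespace ABP

variable {d : ℕ} [NeZero d] {w : Fin d → ℕ}

theorem sum_sub_comp_add_one_eq_zero {G : Type*} [AddCommGroup G] (s : Fin d → G) :
    ∑ i, (s (i + 1) - s i) = 0 := by
  rw [Finset.sum_sub_distrib, sub_eq_zero]
  exact Equiv.sum_comp (Equiv.addRight (1 : Fin d)) s

theorem natCast_ppCount_eq_of_validPath {p : ∀ i : Fin d, Edge w i} (hp : ValidPath w p) :
    (ppCount w p : ZMod 2) = d := by
  set s : Fin d → ZMod 2 := fun i => ((p i).1.val : ZMod 2)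
  set changing := Finset.univ.filter fun i : Fin d => ¬ ParityPres (p i)
  have sub_eq_ite : ∀ a b : ZMod 2, b - a = if a = b then 0 else 1 := by decide
  have step : ∀ i, s (i + 1) - s i = if ParityPres (p i) then 0 else 1 := by
    intro i
    rw [sub_eq_ite]
    congr 1
    rw [ParityPres, hp i, ← ZMod.natCast_eq_natCast_iff']
  have changing_even : (changing.card : ZMod 2) = 0 := by
    rw [← sum_sub_comp_add_one_eq_zero s, Finset.sum_congr rfl fun i _ => step i,
      Finset.sum_ite, Finset.sum_const_zero, Finset.sum_const, nsmul_one, zero_add]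
  have card_add : ppCount w p + changing.card = d :=
    (Finset.card_filter_add_card_filter_not _).trans (Finset.card_fin d)
  calc (ppCount w p : ZMod 2) = (ppCount w p + changing.card : ℕ) := by
        rw [Nat.cast_add, changing_even, add_zero]
    _ = d := congrArg Nat.cast card_add

theorem one_le_ppCount_of_validPath (hodd : Odd d) {p : ∀ i : Fin d, Edge w i}
    (hp : ValidPath w p) : 1 ≤ ppCount w p := by
  refine Nat.one_le_iff_ne_zero.mpr fun h => ?_
  have := natCast_ppCount_eq_of_validPath hp
  rw [h, Nat.cast_zero, eq_comm, ZMod.natCast_eq_zero_iff_even] at this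
  exact Nat.not_even_iff_odd.mpr hodd this

theorem actT_diagonal (c : ∀ i : Fin d, Edge w i → ℂ) (f : (∀ i : Fin d, Edge w i) → ℂ)
    (p : ∀ i : Fin d, Edge w i) :
    actT w (fun i => Matrix.diagonal (c i)) f p = (∏ i, c i (p i)) * f p := by
  refine (Finset.sum_eq_single p (fun q _ hq => ?_) fun h => absurd (Finset.mem_univ p) h).trans
    (by simp)
  obtain ⟨i, hi⟩ := Function.ne_iff.mp hq
  exact mul_eq_zero_of_left
    (Finset.prod_eq_zero (Finset.mem_univ i) (by simp [Ne.symm hi])) _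

theorem prod_ite_parityPres (ε : ℂ) (p : ∀ i : Fin d, Edge w i) :
    ∏ i, (if ParityPres (p i) then ε else 1) = ε ^ ppCount w p := by
  simp [Finset.prod_ite, ppCount]

theorem actT_diagonal_fcom_eq_feps (hodd : Odd d) {ε : ℂ} (hε : ε ≠ 0) :
    actT w (fun i => Matrix.diagonal fun e : Edge w i =>
        (if ParityPres e then ε else 1) * (if i = 0 then ε⁻¹ else 1)) (fcom w) = feps w ε := by
  funext p
  rw [actT_diagonal, Finset.prod_mul_distrib, prod_ite_parityPres,
    Finset.prod_ite_eq' Finset.univ 0 fun _ => ε⁻¹, if_pos (Finset.mem_univ 0), fcom, feps]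
  split_ifs with hp
  · obtain ⟨k, hk⟩ := Nat.exists_eq_add_of_le' (one_le_ppCount_of_validPath hodd hp)
    rw [hk, pow_succ, Nat.add_sub_cancel]
    field_simp
  · rw [mul_zero]

theorem feps_zero (hodd : Odd d) : feps w 0 = f0 w := by
  funext p
  by_cases hp : ValidPath w p
  · have := one_le_ppCount_of_validPath hodd hp
    simp only [feps, f0, hp, true_and, if_true, zero_pow_eq]
    congr 1
    exact propext (by omega)
  · simp [feps, f0, hp]

theorem continuous_feps : Continuous (feps w) :=
  continuous_pi fun p => by
    unfold feps
    split_ifs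
    exacts [continuous_pow _, continuous_const]

end ABP

theorem f0_in_closure_of_format_w_trace_ABP_general (d : ℕ) [NeZero d] (hodd : Odd d)
    (w : Fin d → ℕ) :
    ABP.f0 w ∈ closure {h : (∀ i : Fin d, ABP.Edge w i) → ℂ |
        ∃ g : ∀ i : Fin d, ABP.Edge w i → ABP.Edge w i → ℂ,
          ABP.actT w g (ABP.fcom w) = h} ∧
    (∀ ε : ℂ, ε ≠ 0 →
      ∃ g : ∀ i : Fin d, ABP.Edge w i → ABP.Edge w i → ℂ,
        ABP.actT w g (ABP.fcom w) = ABP.feps w ε) ∧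
    Filter.Tendsto (fun ε : ℂ => ABP.feps w ε) (nhds 0) (nhds (ABP.f0 w)) := by
  have computed : ∀ ε : ℂ, ε ≠ 0 →
      ∃ g : ∀ i : Fin d, ABP.Edge w i → ABP.Edge w i → ℂ,
        ABP.actT w g (ABP.fcom w) = ABP.feps w ε :=
    fun ε hε => ⟨_, ABP.actT_diagonal_fcom_eq_feps hodd hε⟩
  have tendsto : Filter.Tendsto (fun ε : ℂ => ABP.feps w ε) (nhds 0) (nhds (ABP.f0 w)) := by
    rw [← ABP.feps_zero hodd]
    exact ABP.continuous_feps.tendsto 0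
  refine ⟨mem_closure_of_tendsto
    (tendsto.mono_left (nhdsWithin_le_nhds (s := {0}ᶜ))) ?_, computed, tendsto⟩
  exact eventually_nhdsWithin_of_forall fun ε hε => computed ε hε

/-- For odd `d ≥ 3` and width format `w` with all `w i ≥ 2`,
the tensor `f_0` lies in the closure of the set of tensors computed by format-`w`
trace ABPs; concretely, for every `ε ≠ 0` the tensor `f_ε` is computed by a
format-`w` trace ABP and `f_ε → f_0` as `ε → 0`. -/
theorem f0_in_closure_of_format_w_trace_ABP (d : ℕ) [NeZero d] (hd3 : 3 ≤ d) (hodd : Odd d)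
    (w : Fin d → ℕ) (hw : ∀ i, 2 ≤ w i) :
    ABP.f0 w ∈ closure {h : (∀ i : Fin d, ABP.Edge w i) → ℂ |
        ∃ g : ∀ i : Fin d, ABP.Edge w i → ABP.Edge w i → ℂ,
          ABP.actT w g (ABP.fcom w) = h} ∧
    (∀ ε : ℂ, ε ≠ 0 →
      ∃ g : ∀ i : Fin d, ABP.Edge w i → ABP.Edge w i → ℂ,
        ABP.actT w g (ABP.fcom w) = ABP.feps w ε) ∧
    Filter.Tendsto (fun ε : ℂ => ABP.feps w ε) (nhds 0) (nhds (ABP.f0 w)) :=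
  f0_in_closure_of_format_w_trace_ABP_general d hodd w
end

section
/- The tensor f_0 is computed by a trace ABP of format 2w: there exist matrices L_i : E^i → E'^i → ℂ (i ∈ Fin d) such that the tensor (L_0 ⊗ ⋯ ⊗ L_{d−1}) f'_com, defined by ((⊗_i L_i) f'_com)(p) := Σ_{q ∈ Π_i E'^i} (Π_i L_i (p i) (q i)) · f'_com(q), equals f_0. -/
open scoped BigOperators

attribute [local instance] Classical.propDecidable

/-!
Double every layer into two copies, the copy of a vertex being a flag that counts (up to 1)
the parity-preserving edges met since layer 0; on the edge closing the cycle the count must have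
reached exactly 1, and the flag is reset. Let `L i` be the 0/1 matrix of the lifts of edges that
respect this rule. A valid path of the doubled format then projects to a valid path `p` whose flags
are forced to be the prefix counts of parity-preserving edges of `p`, so such a lift of `p` exists
iff `p` has exactly one parity-preserving edge, and then it is unique.
-/

namespace Fin

variable {d : ℕ} [NeZero d]

theorem add_one_induction {P : Fin d → Prop} (zero : P 0)
    (step : ∀ i : Fin d, i + 1 ≠ 0 → P i → P (i + 1)) (i : Fin d) : P i := by
  obtain ⟨n, rfl⟩ := Nat.exists_eq_succ_of_ne_zero (NeZero.ne d)
  induction i using Fin.induction with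
  | zero => exact zero
  | succ i ih =>
    rw [← coeSucc_eq_succ]
    exact step _ (by rw [coeSucc_eq_succ]; exact succ_ne_zero i) ih

theorem val_add_one_of_add_one_ne_zero {i : Fin d} (h : i + 1 ≠ 0) :
    (i + 1).val = i.val + 1 := by
  obtain ⟨n, rfl⟩ := Nat.exists_eq_succ_of_ne_zero (NeZero.ne d)
  rw [val_add_one, if_neg]
  rintro rfl
  exact h (last_add_one n)

theorem val_add_one_of_add_one_eq_zero {i : Fin d} (h : i + 1 = 0) :
    i.val + 1 = d := by
  obtain ⟨n, rfl⟩ := Nat.exists_eq_succ_of_ne_zero (NeZero.ne d)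
  have := val_add_one i
  split_ifs at this with hi
  · simp [hi]
  · rw [h] at this; simp at this

end Fin

namespace ABP

open Finset

section RunningCount

variable {d : ℕ} {b : Fin d → ℕ}

def prefixSum (b : Fin d → ℕ) (k : ℕ) : ℕ := ∑ j with j.val < k, b j

@[simp] theorem prefixSum_zero : prefixSum b 0 = 0 := by simp [prefixSum]

theorem prefixSum_val_add_one (i : Fin d) : prefixSum b (i.val + 1) = prefixSum b i + b i := by
  simp only [prefixSum, sum_filter, ← Fintype.sum_ite_eq i b, ← sum_add_distrib]
  refine sum_congr rfl fun j _ => ?_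
  by_cases hij : i = j
  · simp [hij]
  · have := Fin.val_ne_of_ne hij
    rw [if_neg hij, add_zero]
    exact if_congr (by omega) rfl rfl

theorem prefixSum_of_le {k : ℕ} (hk : d ≤ k) : prefixSum b k = ∑ j, b j := by
  rw [prefixSum, filter_true_of_mem fun j _ => j.isLt.trans_le hk]

theorem prefixSum_le_sum (k : ℕ) : prefixSum b k ≤ ∑ j, b j :=
  sum_le_sum_of_subset (filter_subset _ _)

variable [NeZero d]

def RunningCountStep (i : Fin d) (b : ℕ) (s s' : Fin 2) : Prop :=
  if i + 1 = 0 then s' = 0 ∧ s.val + b = 1 else s'.val = s.val + b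

def IsRunningCount (b : Fin d → ℕ) (s : Fin d → Fin 2) : Prop :=
  ∀ i, RunningCountStep i (b i) (s i) (s (i + 1))

noncomputable def runningCount (b : Fin d → ℕ) (i : Fin d) : Fin 2 :=
  Fin.ofNat 2 (prefixSum b i)

theorem IsRunningCount.val_eq_prefixSum {s : Fin d → Fin 2} (hs : IsRunningCount b s)
    (i : Fin d) : (s i).val = prefixSum b i := by
  induction i using Fin.add_one_induction with
  | zero =>
    have h := hs (-1)
    rw [RunningCountStep, if_pos (neg_add_cancel 1), neg_add_cancel] at h
    simp [h.1]
  | step i hi ih =>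
    have h := hs i
    rw [RunningCountStep, if_neg hi] at h
    rw [h, ih, Fin.val_add_one_of_add_one_ne_zero hi, prefixSum_val_add_one]

theorem IsRunningCount.sum_eq_one {s : Fin d → Fin 2} (hs : IsRunningCount b s) :
    ∑ i, b i = 1 := by
  have h := hs (-1)
  rw [RunningCountStep, if_pos (neg_add_cancel 1), hs.val_eq_prefixSum] at h
  rw [← h.2, ← prefixSum_val_add_one,
    prefixSum_of_le (Fin.val_add_one_of_add_one_eq_zero (neg_add_cancel 1)).ge]

theorem IsRunningCount.eq_runningCount {s : Fin d → Fin 2} (hs : IsRunningCount b s) :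
    s = runningCount b := by
  funext i
  ext
  rw [runningCount, Fin.val_ofNat, ← hs.val_eq_prefixSum, Nat.mod_eq_of_lt (s i).isLt]

theorem isRunningCount_runningCount (hb : ∑ i, b i = 1) :
    IsRunningCount b (runningCount b) := by
  intro i
  have hle := prefixSum_le_sum (b := b) (i.val + 1)
  rw [prefixSum_val_add_one, hb] at hle
  unfold RunningCountStep
  split_ifs with hi
  · refine ⟨by ext; simp [runningCount, hi], ?_⟩
    rw [← hb, ← prefixSum_of_le (Fin.val_add_one_of_add_one_eq_zero hi).ge,
      prefixSum_val_add_one, runningCount, Fin.val_ofNat]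
    omega
  · simp only [runningCount, Fin.val_ofNat, Fin.val_add_one_of_add_one_ne_zero hi,
      prefixSum_val_add_one]
    omega

end RunningCount

section Lift

variable {d : ℕ} [NeZero d] {w : Fin d → ℕ}

noncomputable def ppBit {i : Fin d} (e : Edge w i) : ℕ := if ParityPres e then 1 else 0

theorem ppCount_eq_sum_ppBit (p : ∀ i, Edge w i) : ppCount w p = ∑ i, ppBit (p i) :=
  card_filter _ _

def liftVertex {n : ℕ} (s : Fin 2) (v : Fin n) : Fin (2 * n) := finProdFinEquiv (s, v)

@[simp] theorem liftVertex_inj {n : ℕ} {s s' : Fin 2} {v v' : Fin n} :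
    liftVertex s v = liftVertex s' v' ↔ s = s' ∧ v = v' :=
  finProdFinEquiv.injective.eq_iff.trans Prod.mk_inj

def LiftsEdge (i : Fin d) (e : Edge w i) (e' : Edge (fun j => 2 * w j) i) : Prop :=
  ∃ s s' : Fin 2, e' = (liftVertex s e.1, liftVertex s' e.2) ∧ RunningCountStep i (ppBit e) s s'

noncomputable def liftPath (p : ∀ i, Edge w i) (i : Fin d) : Edge (fun j => 2 * w j) i :=
  (liftVertex (runningCount (fun j => ppBit (p j)) i) (p i).1,
    liftVertex (runningCount (fun j => ppBit (p j)) (i + 1)) (p i).2)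

theorem liftsEdge_and_validPath_iff (p : ∀ i, Edge w i)
    (q : ∀ i, Edge (fun j => 2 * w j) i) :
    (∀ i, LiftsEdge i (p i) (q i)) ∧ ValidPath (fun j => 2 * w j) q ↔
      (ValidPath w p ∧ ppCount w p = 1) ∧ q = liftPath p := by
  rw [ppCount_eq_sum_ppBit]
  constructor
  · rintro ⟨hpq, hq⟩
    choose s s' hqs hstep using hpq
    have hmatch : ∀ i, s' i = s (i + 1) ∧ (p i).2 = (p (i + 1)).1 := fun i => by
      simpa [hqs] using hq i
    have hs : IsRunningCount (fun i => ppBit (p i)) s := fun i => (hmatch i).1 ▸ hstep i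
    refine ⟨⟨fun i => (hmatch i).2, hs.sum_eq_one⟩, funext fun i => ?_⟩
    rw [hqs i, (hmatch i).1, hs.eq_runningCount, liftPath]
  · rintro ⟨⟨hp, hc⟩, rfl⟩
    exact ⟨fun i => ⟨_, _, rfl, isRunningCount_runningCount hc i⟩,
      fun i => by simp [liftPath, hp i]⟩

end Lift

end ABP

theorem f0_computed_by_format_2w_trace_ABP_general (d : ℕ) [NeZero d]
    (w : Fin d → ℕ) :
    ∃ L : ∀ i : Fin d, ABP.Edge w i → ABP.Edge (fun j => 2 * w j) i → ℂ,
      ∀ p : ∀ i : Fin d, ABP.Edge w i,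
        (∑ q : ∀ i : Fin d, ABP.Edge (fun j => 2 * w j) i,
          (∏ i : Fin d, L i (p i) (q i)) * ABP.fcom (fun j => 2 * w j) q) = ABP.f0 w p := by
  refine ⟨fun i e e' => if ABP.LiftsEdge i e e' then 1 else 0, fun p => ?_⟩
  simp only [ABP.fcom, Finset.prod_boole, Finset.mem_univ, true_imp_iff, ite_zero_mul_ite_zero,
    mul_one, ABP.liftsEdge_and_validPath_iff, ABP.f0]
  by_cases h : ABP.ValidPath w p ∧ ABP.ppCount w p = 1 <;> simp [h]

/-- For odd `d ≥ 3` and width format `w` with all `w i ≥ 2`,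
the tensor `f_0` is computed by a trace ABP of format `2w`: there exist matrices
`L i : E^i → E'^i → ℂ` with `(L_0 ⊗ ⋯ ⊗ L_{d-1}) f'_com = f_0`, where `E'` are the
edge sets for the doubled format and `f'_com` is its valid-path tensor. -/
theorem f0_computed_by_format_2w_trace_ABP (d : ℕ) [NeZero d] (hd3 : 3 ≤ d) (hodd : Odd d)
    (w : Fin d → ℕ) (hw : ∀ i, 2 ≤ w i) :
    ∃ L : ∀ i : Fin d, ABP.Edge w i → ABP.Edge (fun j => 2 * w j) i → ℂ,
      ∀ p : ∀ i : Fin d, ABP.Edge w i,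
        (∑ q : ∀ i : Fin d, ABP.Edge (fun j => 2 * w j) i,
          (∏ i : Fin d, L i (p i) (q i)) * ABP.fcom (fun j => 2 * w j) q) = ABP.f0 w p :=
  f0_computed_by_format_2w_trace_ABP_general d w
end

section
/- The tensor f_0 is concise: for every j ∈ Fin d, the flattening matrix M_{f_0}^j has full row rank w j · w (j+1). -/
/-!
Every edge `e` of layer `j` lies on a valid path `p` with exactly one parity-preserving edge:
after the endpoints of `e`, give the vertices alternating parities; the odd length of the cycle
lets this close up with the single parity-preserving edge at `e` or right after it. An edge of a
valid path is determined by its neighbours, so inserting any other edge at layer `j` of `p`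
breaks the path: the column of the `j`-th flattening of `f₀` indexed by the rest of `p` is the
unit vector at `e`. Thus the columns span `ℂ^(E^j)`.
-/

open scoped BigOperators

attribute [local instance] Classical.propDecidable

namespace ABP

/-- Insert an edge `e` of layer `j` into a tuple of edges of all other layers,
producing a full edge tuple. -/
def insertAt {d : ℕ} [NeZero d] (w : Fin d → ℕ) (j : Fin d) (e : Edge w j)
    (c : ∀ i : {i : Fin d // i ≠ j}, Edge w i.val) : ∀ i : Fin d, Edge w i :=
  fun i => if h : i = j then cast (congrArg (Edge w) h.symm) e else c ⟨i, h⟩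

/-- The `j`-th flattening matrix of a tensor: rows indexed by edges of layer `j`,
columns indexed by tuples of edges of the other layers. -/
def flatten {d : ℕ} [NeZero d] (w : Fin d → ℕ)
    (f : (∀ i : Fin d, Edge w i) → ℂ) (j : Fin d) :
    Matrix (Edge w j) (∀ i : {i : Fin d // i ≠ j}, Edge w i.val) ℂ :=
  Matrix.of fun e c => f (insertAt w j e c)

/-- A tensor is concise if every flattening matrix has full row rank. -/
def Concise {d : ℕ} [NeZero d] (w : Fin d → ℕ)
    (f : (∀ i : Fin d, Edge w i) → ℂ) : Prop :=
  ∀ j : Fin d, (flatten w f j).rank = w j * w (j + 1)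

end ABP

theorem Matrix.rank_eq_card_of_forall_exists_col_eq_single {m n R : Type*} [Fintype m]
    [Fintype n] [DecidableEq m] [CommSemiring R] [StrongRankCondition R] (A : Matrix m n R)
    (h : ∀ i, ∃ c, A.col c = Pi.single i 1) : A.rank = Fintype.card m := by
  have hspan : Submodule.span R (Set.range A.col) = ⊤ := by
    rw [eq_top_iff, ← (Pi.basisFun R m).span_eq, Submodule.span_le]
    rintro _ ⟨i, rfl⟩
    obtain ⟨c, hc⟩ := h i
    exact Submodule.subset_span ⟨c, by rw [hc, Pi.basisFun_apply]⟩
  rw [Matrix.rank_eq_finrank_span_cols, hspan, finrank_top, Module.finrank_fintype_fun_eq_card]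

namespace Fin

theorem one_ne_zero_of_one_lt {d : ℕ} [NeZero d] (hd : 1 < d) : (1 : Fin d) ≠ 0 :=
  Fin.ne_of_val_ne (by simp [Nat.mod_eq_of_lt hd])

theorem val_add_one_eq_mod {d : ℕ} [NeZero d] (x : Fin d) : (x + 1).val = (x.val + 1) % d := by
  rw [Fin.val_add, Fin.val_one', Nat.add_mod_mod]

end Fin

namespace ABP

open Finset

/-- Vertex labels around the cycle, indexed by the distance from the layer carrying the
edge `(a, b)`. -/
def parityWalk (a b : ℕ) : ℕ → ℕ
  | 0 => a
  | 1 => b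
  | k + 2 => (a + k + 1) % 2

theorem parityWalk_mod_two_eq_iff {d : ℕ} (hd : 3 ≤ d) (hodd : Odd d) (a b : ℕ) {n : ℕ}
    (hn : n < d) :
    parityWalk a b n % 2 = parityWalk a b ((n + 1) % d) % 2 ↔ n = (a + b) % 2 := by
  obtain ⟨t, rfl⟩ := hodd
  rcases Nat.lt_or_ge (n + 1) (2 * t + 1) with h | h
  · rw [Nat.mod_eq_of_lt h]
    rcases n with _ | _ | n <;> simp only [parityWalk] <;> omega
  · obtain ⟨k, rfl⟩ : ∃ k, n = k + 2 := ⟨n - 2, by omega⟩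
    rw [show k + 2 + 1 = 2 * t + 1 by omega, Nat.mod_self]
    simp only [parityWalk]
    omega

theorem card_filter_parityWalk {d : ℕ} [NeZero d] (hd : 3 ≤ d) (hodd : Odd d) (a b : ℕ) :
    #{x : Fin d | parityWalk a b x % 2 = parityWalk a b (x + 1 : Fin d) % 2} = 1 := by
  rw [card_eq_one]
  refine ⟨⟨(a + b) % 2, by omega⟩, ?_⟩
  ext x
  simp only [mem_filter, mem_univ, true_and, mem_singleton, Fin.ext_iff, Fin.val_add_one_eq_mod]
  exact parityWalk_mod_two_eq_iff hd hodd a b x.isLt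

variable {d : ℕ} [NeZero d] {w : Fin d → ℕ}

theorem insertAt_apply_self (j : Fin d) (e : Edge w j)
    (c : ∀ i : {i : Fin d // i ≠ j}, Edge w i.val) : insertAt w j e c j = e := by
  simp [insertAt]

theorem insertAt_apply_of_ne {j : Fin d} (e : Edge w j)
    (c : ∀ i : {i : Fin d // i ≠ j}, Edge w i.val) {i : Fin d} (h : i ≠ j) :
    insertAt w j e c i = c ⟨i, h⟩ :=
  dif_neg h

theorem insertAt_restrict (p : ∀ i, Edge w i) (j : Fin d) :
    insertAt w j (p j) (fun i => p i) = p := by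
  funext i
  by_cases h : i = j
  · subst h
    exact insertAt_apply_self ..
  · exact insertAt_apply_of_ne _ _ h

theorem ValidPath.val_snd_eq_of_add_one_eq {p : ∀ i, Edge w i} (hp : ValidPath w p)
    {k i : Fin d} (h : k + 1 = i) : ((p k).2 : ℕ) = (p i).1 := by
  subst h
  exact congrArg Fin.val (hp k)

theorem eq_of_validPath_insertAt (hd : 1 < d) {p : ∀ i, Edge w i} (hp : ValidPath w p)
    {j : Fin d} {e : Edge w j} (he : ValidPath w (insertAt w j e fun i => p i)) : e = p j := by
  have hsucc : j + 1 ≠ j := fun h => Fin.one_ne_zero_of_one_lt hd (add_eq_left.mp h)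
  have hpred : j - 1 ≠ j := fun h => Fin.one_ne_zero_of_one_lt hd (sub_eq_self.mp h)
  have h1 := he.val_snd_eq_of_add_one_eq (sub_add_cancel j 1)
  have h2 := he j
  rw [insertAt_apply_self, insertAt_apply_of_ne _ _ hpred] at h1
  rw [insertAt_apply_self, insertAt_apply_of_ne _ _ hsucc] at h2
  exact Prod.ext (Fin.ext (h1.symm.trans (hp.val_snd_eq_of_add_one_eq (sub_add_cancel j 1))))
    (h2.trans (hp j).symm)

theorem col_flatten_f0 (hd : 1 < d) {p : ∀ i, Edge w i} (hp : ValidPath w p)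
    (hp1 : ppCount w p = 1) (j : Fin d) :
    (flatten w (f0 w) j).col (fun i => p i) = Pi.single (p j) 1 := by
  funext e
  simp only [Matrix.col, Matrix.transpose_apply, flatten, Matrix.of_apply, f0]
  by_cases he : e = p j
  · subst he
    rw [insertAt_restrict, Pi.single_eq_same, if_pos ⟨hp, hp1⟩]
  · rw [Pi.single_eq_of_ne he, if_neg]
    exact fun h => he (eq_of_validPath_insertAt hd hp h.1)

def pathThrough (v : ∀ i, Fin (w i)) : ∀ i, Edge w i :=
  fun i => (v i, v (i + 1))

theorem validPath_pathThrough (v : ∀ i, Fin (w i)) : ValidPath w (pathThrough v) :=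
  fun _ => rfl

theorem ppCount_pathThrough (v : ∀ i, Fin (w i)) :
    ppCount w (pathThrough v) = #{i | (v i).val % 2 = (v (i + 1)).val % 2} := by
  simp only [ppCount, ParityPres, pathThrough]
  congr

theorem parityWalk_sub_lt (hd : 1 < d) (hw : ∀ i, 2 ≤ w i) {j : Fin d} (e : Edge w j)
    (i : Fin d) : parityWalk e.1 e.2 (i - j).val < w i := by
  rcases h : (i - j).val with _ | _ | k
  · obtain rfl : i = j := sub_eq_zero.mp (Fin.ext h)
    exact e.1.isLt
  · obtain rfl : i = j + 1 := by
      rw [← sub_eq_iff_eq_add']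
      ext
      simp [h, Nat.mod_eq_of_lt hd]
    exact e.2.isLt
  · exact (Nat.mod_lt _ two_pos).trans_le (hw i)

theorem exists_validPath_ppCount_eq_one (hd : 3 ≤ d) (hodd : Odd d) (hw : ∀ i, 2 ≤ w i)
    {j : Fin d} (e : Edge w j) : ∃ p, ValidPath w p ∧ ppCount w p = 1 ∧ p j = e := by
  let v : ∀ i, Fin (w i) := fun i => ⟨parityWalk e.1 e.2 (i - j).val,
    parityWalk_sub_lt (by omega) hw e i⟩
  refine ⟨pathThrough v, validPath_pathThrough v, ?_, ?_⟩
  · rw [ppCount_pathThrough, ← card_filter_parityWalk hd hodd e.1 e.2]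
    exact card_equiv (Equiv.subRight j) (by simp [v, add_sub_right_comm])
  · have h1 : (j + 1 - j).val = 1 := by simp [Nat.mod_eq_of_lt (show 1 < d by omega)]
    exact Prod.ext (Fin.ext (by simp [v, pathThrough, parityWalk]))
      (Fin.ext (by simp only [v, pathThrough, h1, parityWalk]))

end ABP

/-- For odd `d ≥ 3` and width format `w` with all `w i ≥ 2`,
the tensor `f_0` is concise: every flattening has full row rank `w j * w (j+1)`. -/
theorem f0_concise (d : ℕ) [NeZero d] (hd3 : 3 ≤ d) (hodd : Odd d)
    (w : Fin d → ℕ) (hw : ∀ i, 2 ≤ w i) :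
    ABP.Concise w (ABP.f0 w) := by
  intro j
  rw [← show Fintype.card (ABP.Edge w j) = w j * w (j + 1) by simp]
  refine Matrix.rank_eq_card_of_forall_exists_col_eq_single _ fun e => ?_
  obtain ⟨p, hp, hp1, rfl⟩ := ABP.exists_validPath_ppCount_eq_one hd3 hodd hw e
  exact ⟨_, ABP.col_flatten_f0 (by omega) hp hp1 j⟩
end

section
/- For every tensor f : (Π i : Fin d, Fin (n i)) → ℂ and every tuple g = (g_i) of invertible matrices g_i : Fin (n i) → Fin (n i) → ℂ, the tangent space satisfies T_{(⊗_i g_i) f} = (⊗_i g_i) T_f (the image of T_f under the invertible linear map ⊗_i g_i); in particular dim T_{(⊗_i g_i) f} = dim T_f. -/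
open scoped BigOperators

namespace Tensor

variable {d : ℕ} {n : Fin d → ℕ}

/-- The action of a tuple of matrices `g i : Fin (n i) → Fin (n i) → ℂ` on a tensor:
`((⊗ᵢ gᵢ) f)(p) = Σ_q (Πᵢ gᵢ (p i) (q i)) · f q`. -/
noncomputable def actT (g : ∀ i : Fin d, Fin (n i) → Fin (n i) → ℂ)
    (f : (∀ i : Fin d, Fin (n i)) → ℂ) : (∀ i : Fin d, Fin (n i)) → ℂ :=
  fun p => ∑ q : ∀ i : Fin d, Fin (n i), (∏ i : Fin d, g i (p i) (q i)) * f q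

/-- The Lie algebra action of a tuple of matrices `A i : Fin (n i) → Fin (n i) → ℂ`
on a tensor: `(A · f)(p) = Σᵢ Σ_k Aᵢ (p i) k · f (p with i-th entry replaced by k)`. -/
noncomputable def lieAct (A : ∀ i : Fin d, Fin (n i) → Fin (n i) → ℂ)
    (f : (∀ i : Fin d, Fin (n i)) → ℂ) : (∀ i : Fin d, Fin (n i)) → ℂ :=
  fun p => ∑ i : Fin d, ∑ k : Fin (n i), A i (p i) k * f (Function.update p i k)

/-- The tangent space `T_f` of the group action at `f`: the set of all tensors
`A · f` for tuples of matrices `A`. -/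
def Tspace (f : (∀ i : Fin d, Fin (n i)) → ℂ) : Set ((∀ i : Fin d, Fin (n i)) → ℂ) :=
  {h | ∃ A : ∀ i : Fin d, Fin (n i) → Fin (n i) → ℂ, h = lieAct A f}

end Tensor

/-! `(⊗ᵢ gᵢ) f` is multiplication by the Kronecker matrix `⊗ᵢ gᵢ`, which is multiplicative in `g`,
and `A · f = Σᵢ (1 ⊗ ⋯ ⊗ Aᵢ ⊗ ⋯ ⊗ 1) f`. Hence `A · ((⊗ g) f) = (⊗ g) (B · f)` whenever
`Aᵢ gᵢ = gᵢ Bᵢ` for all `i`, i.e. for `Bᵢ = gᵢ⁻¹ Aᵢ gᵢ`. Conjugation by `gᵢ` being a bijection of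
matrices, `T_{(⊗ g) f} = (⊗ g) T_f`, and the invertible map `⊗ g` preserves dimensions. -/

open Matrix Function

section UpdateOne

variable {ι : Type*} [DecidableEq ι] {M : ι → Type*} [∀ i, MulOneClass (M i)]

theorem Function.update_one_mul (i : ι) (a : M i) (g : ∀ j, M j) :
    update (1 : ∀ j, M j) i a * g = update g i (a * g i) := by
  conv_lhs => rw [← update_eq_self i g]
  rw [← update_mul, one_mul]

theorem Function.mul_update_one (i : ι) (a : M i) (g : ∀ j, M j) :
    g * update (1 : ∀ j, M j) i a = update g i (g i * a) := by
  conv_lhs => rw [← update_eq_self i g]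
  rw [← update_mul, mul_one]

end UpdateOne

namespace Tensor

section Kronecker

variable {ι : Type*} [Fintype ι] [DecidableEq ι] {m : ι → Type*} [∀ i, Fintype (m i)]
  [∀ i, DecidableEq (m i)] {R : Type*} [CommSemiring R]

/-- The Kronecker product `⊗ᵢ gᵢ`, as a matrix indexed by multi-indices. -/
def kroneckerHom : (∀ i, Matrix (m i) (m i) R) →* Matrix (∀ i, m i) (∀ i, m i) R where
  toFun g := of fun p q => ∏ i, g i (p i) (q i)
  map_one' := by
    ext p q
    simp only [Pi.one_apply, one_apply, of_apply, Fintype.prod_boole, funext_iff]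
  map_mul' g h := by
    ext p r
    simp only [Pi.mul_apply, mul_apply, of_apply, Fintype.prod_sum, Finset.prod_mul_distrib]

theorem kroneckerHom_apply (g : ∀ i, Matrix (m i) (m i) R) (p q : ∀ i, m i) :
    kroneckerHom g p q = ∏ i, g i (p i) (q i) := rfl

theorem kroneckerHom_update_one_apply_update (i : ι) (a : Matrix (m i) (m i) R) (p : ∀ j, m j)
    (k : m i) : kroneckerHom (update 1 i a) p (update p i k) = a (p i) k := by
  rw [kroneckerHom_apply, Fintype.prod_eq_single i fun j hj => by simp [hj]]
  simp

theorem kroneckerHom_update_one_apply_of_ne (i : ι) (a : Matrix (m i) (m i) R) {p q : ∀ j, m j}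
    {j : ι} (hj : j ≠ i) (hpq : p j ≠ q j) : kroneckerHom (update 1 i a) p q = 0 :=
  Finset.prod_eq_zero (Finset.mem_univ j) (by simp [hj, hpq])

theorem kroneckerHom_update_one_mulVec_apply (i : ι) (a : Matrix (m i) (m i) R)
    (f : (∀ j, m j) → R) (p : ∀ j, m j) :
    (kroneckerHom (update 1 i a) *ᵥ f) p = ∑ k, a (p i) k * f (update p i k) := by
  refine (Fintype.sum_of_injective (update p i) (update_injective p i) _ _ ?_ ?_).symm
  · rintro q hq
    dsimp only
    obtain ⟨j, hj, hpq⟩ : ∃ j, j ≠ i ∧ p j ≠ q j := by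
      by_contra! h
      exact hq ⟨q i, funext fun j => by
        rcases eq_or_ne j i with rfl | hj <;> simp [*]⟩
    rw [kroneckerHom_update_one_apply_of_ne i a hj hpq, zero_mul]
  · intro k
    dsimp only
    rw [kroneckerHom_update_one_apply_update]

end Kronecker

variable {d : ℕ} {n : Fin d → ℕ}

theorem actT_eq_mulVec (g : ∀ i, Matrix (Fin (n i)) (Fin (n i)) ℂ) (f : (∀ i, Fin (n i)) → ℂ) :
    actT g f = kroneckerHom g *ᵥ f := rfl

theorem lieAct_eq_sum_mulVec (A : ∀ i, Matrix (Fin (n i)) (Fin (n i)) ℂ)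
    (f : (∀ i, Fin (n i)) → ℂ) :
    lieAct A f = ∑ i, kroneckerHom (update 1 i (A i)) *ᵥ f := by
  ext p
  simp only [lieAct, Finset.sum_apply, kroneckerHom_update_one_mulVec_apply]

theorem lieAct_actT_of_mul_eq_mul (g A B : ∀ i, Matrix (Fin (n i)) (Fin (n i)) ℂ)
    (h : ∀ i, A i * g i = g i * B i) (f : (∀ i, Fin (n i)) → ℂ) :
    lieAct A (actT g f) = actT g (lieAct B f) := by
  simp only [actT_eq_mulVec, lieAct_eq_sum_mulVec, mulVec_sum, mulVec_mulVec, ← map_mul,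
    update_one_mul, mul_update_one, h]

theorem Tspace_actT {g : ∀ i, Matrix (Fin (n i)) (Fin (n i)) ℂ} (hg : ∀ i, IsUnit (g i))
    (f : (∀ i, Fin (n i)) → ℂ) : Tspace (actT g f) = actT g '' Tspace f := by
  have hdet i : IsUnit (g i).det := (isUnit_iff_isUnit_det _).mp (hg i)
  ext h
  constructor
  · rintro ⟨(A : ∀ i, Matrix (Fin (n i)) (Fin (n i)) ℂ), rfl⟩
    refine ⟨_, ⟨fun i => (g i)⁻¹ * A i * g i, rfl⟩, ?_⟩
    refine (lieAct_actT_of_mul_eq_mul g A _ (fun i => ?_) f).symm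
    rw [Matrix.mul_assoc, mul_nonsing_inv_cancel_left _ _ (hdet i)]
  · rintro ⟨_, ⟨(B : ∀ i, Matrix (Fin (n i)) (Fin (n i)) ℂ), rfl⟩, rfl⟩
    exact ⟨fun i => g i * B i * (g i)⁻¹,
      lieAct_actT_of_mul_eq_mul g _ B (fun i => nonsing_inv_mul_cancel_right _ _ (hdet i)) f |>.symm⟩

theorem injective_actT {g : ∀ i, Matrix (Fin (n i)) (Fin (n i)) ℂ} (hg : ∀ i, IsUnit (g i)) :
    Injective (actT g) :=
  mulVec_injective_iff_isUnit.mpr ((Pi.isUnit_iff.mpr hg).map kroneckerHom)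

end Tensor

theorem tangent_space_of_orbit_general (d : ℕ) (n : Fin d → ℕ)
    (f : (∀ i : Fin d, Fin (n i)) → ℂ)
    (g : ∀ i : Fin d, Fin (n i) → Fin (n i) → ℂ)
    (hg : ∀ i : Fin d, IsUnit (Matrix.of (g i) : Matrix (Fin (n i)) (Fin (n i)) ℂ)) :
    Tensor.Tspace (Tensor.actT g f) = Tensor.actT g '' Tensor.Tspace f ∧
    Module.finrank ℂ (Submodule.span ℂ (Tensor.Tspace (Tensor.actT g f))) =
      Module.finrank ℂ (Submodule.span ℂ (Tensor.Tspace f)) := by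
  have himage := Tensor.Tspace_actT (g := g) hg f
  refine ⟨himage, ?_⟩
  let actTₗ := (Tensor.kroneckerHom (m := fun i => Fin (n i)) g).mulVecLin
  have hmap : Submodule.span ℂ (Tensor.Tspace (Tensor.actT g f)) =
      (Submodule.span ℂ (Tensor.Tspace f)).map actTₗ := by
    rw [himage, Submodule.map_span]
    rfl
  rw [hmap]
  exact (Submodule.equivMapOfInjective actTₗ (Tensor.injective_actT (g := g) hg) _).finrank_eq.symm

/-- For every tensor `f` and every tuple `g` of invertible matrices,
the tangent space satisfies `T_{(⊗ᵢ gᵢ) f} = (⊗ᵢ gᵢ) T_f`; in particular the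
dimensions of the tangent spaces coincide. -/
theorem tangent_space_of_orbit (d : ℕ) (hd : 1 ≤ d) (n : Fin d → ℕ)
    (f : (∀ i : Fin d, Fin (n i)) → ℂ)
    (g : ∀ i : Fin d, Fin (n i) → Fin (n i) → ℂ)
    (hg : ∀ i : Fin d, IsUnit (Matrix.of (g i) : Matrix (Fin (n i)) (Fin (n i)) ℂ)) :
    Tensor.Tspace (Tensor.actT g f) = Tensor.actT g '' Tensor.Tspace f ∧
    Module.finrank ℂ (Submodule.span ℂ (Tensor.Tspace (Tensor.actT g f))) =
      Module.finrank ℂ (Submodule.span ℂ (Tensor.Tspace f)) :=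
  tangent_space_of_orbit_general d n f g hg
end
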